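/- arXiv:2005.02629 — 8 statements merged into one kernel-verified Lean document; each statement's English description precedes it below -/
import Mathlib

section
/- Let 3 ≤ r ≤ n-2. Define the real matrix M with rows indexed by r-element subsets I of [n] and columns indexed by 2-element subsets J of [n], where M_{I,J} = 1 if J ⊆ I and 0 otherwise. Define the matrix M⁺ with rows indexed by 2-subsets J and columns indexed by r-subsets I, where M⁺_{J,I} = (-1)^{|I∩J|} * ((r-2)/(r-|I∩J|)) * (1 / C(n-2, r-|I∩J|)). Then M⁺ M is the identity matrix of size C(n,2). -/
/-!
Column `J'` of `M` is the indicator of the `r`-sets `I ⊇ J'`, so `(M⁺ M)_{J,J'}` is the sum of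
`M⁺_{J,I}` over those `I`, and `M⁺_{J,I}` only depends on `k = |I ∩ J|`. Sorting the `r`-sets
`I ⊇ J'` by which points of `J \ J'` they contain, each class consists of the `r`-sets squeezed
between two disjoint sets and has a binomial size, and `|I ∩ J|` is constant on it. The entry
becomes a combination of at most four binomial ratios, which equals `1` for `J = J'` and cancels
by `(N + 1) C(N, K) = C(N + 1, K + 1) (K + 1)` when `|J ∩ J'|` is `1` or `0`.
-/

open Finset

section Counting

variable {α : Type*} [Fintype α] [DecidableEq α]

def powersetCardBetween (r : ℕ) (A B : Finset α) : Finset (Finset α) :=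
  {I ∈ powersetCard r univ | A ⊆ I ∧ Disjoint I B}

variable {r : ℕ} {A B I J : Finset α}

lemma mem_powersetCardBetween :
    I ∈ powersetCardBetween r A B ↔ #I = r ∧ A ⊆ I ∧ Disjoint I B := by
  simp [powersetCardBetween]

lemma powersetCardBetween_empty_right :
    powersetCardBetween r A ∅ = {I ∈ powersetCard r (univ : Finset α) | A ⊆ I} := by
  simp [powersetCardBetween]

lemma card_powersetCardBetween (hAB : Disjoint A B) (hr : #A ≤ r) :
    #(powersetCardBetween r A B) = (Fintype.card α - #A - #B).choose (r - #A) := by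
  have hbij : #(powersetCardBetween r A B) = #(powersetCard (r - #A) (A ∪ B)ᶜ) := by
    refine card_nbij' (· \ A) (· ∪ A) ?_ ?_ ?_ ?_
    · intro I hI
      simp only [mem_coe, mem_powersetCardBetween, mem_powersetCard] at hI ⊢
      obtain ⟨rfl, hAI, hIB⟩ := hI
      refine ⟨fun x hx => ?_, card_sdiff_of_subset hAI⟩
      simp only [mem_sdiff, mem_compl, mem_union] at hx ⊢
      exact fun h => h.elim hx.2 (disjoint_left.mp hIB hx.1)
    · intro S hS
      simp only [mem_coe, mem_powersetCardBetween, mem_powersetCard,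
        subset_compl_iff_disjoint_right, disjoint_union_right] at hS ⊢
      obtain ⟨⟨hSA, hSB⟩, hS⟩ := hS
      refine ⟨by rw [card_union_of_disjoint hSA]; omega, subset_union_right,
        disjoint_union_left.2 ⟨hSB, hAB⟩⟩
    · intro I hI
      exact sdiff_union_of_subset (mem_powersetCardBetween.1 hI).2.1
    · intro S hS
      simp only [mem_coe, mem_powersetCard, subset_compl_iff_disjoint_right,
        disjoint_union_right] at hS
      exact union_sdiff_cancel_right hS.1.1
  rw [hbij, card_powersetCard, card_compl, card_union_of_disjoint hAB, Nat.sub_sub]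

lemma powersetCardBetween_eq_empty (hr : r < #A) : powersetCardBetween r A B = ∅ := by
  ext I
  simp only [mem_powersetCardBetween, notMem_empty, iff_false]
  rintro ⟨rfl, hAI, -⟩
  exact (card_le_card hAI).not_gt hr

lemma sum_powersetCardBetween_split {M : Type*} [AddCommMonoid M] (f : Finset α → M) (x : α) :
    ∑ I ∈ powersetCardBetween r A B, f I =
      ∑ I ∈ powersetCardBetween r (insert x A) B, f I +
        ∑ I ∈ powersetCardBetween r A (insert x B), f I := by
  rw [← sum_filter_add_sum_filter_not _ (x ∈ ·)]
  congr 1 <;> congr 1 <;> ext I <;>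
    simp only [mem_filter, mem_powersetCardBetween, insert_subset_iff, disjoint_insert_right] <;>
    tauto

lemma inter_eq_of_mem_powersetCardBetween (hJ : J ⊆ A ∪ B)
    (hI : I ∈ powersetCardBetween r A B) :
    I ∩ J = A ∩ J := by
  obtain ⟨-, hAI, hIB⟩ := mem_powersetCardBetween.1 hI
  ext x
  have := @hJ x
  have := @hAI x
  have : x ∈ I → x ∉ B := fun h => disjoint_left.1 hIB h
  simp only [mem_inter, mem_union] at *
  tauto

lemma sum_powersetCardBetween_card_inter {M : Type*} [AddCommMonoid M] (F : ℕ → M)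
    (hJ : J ⊆ A ∪ B) :
    ∑ I ∈ powersetCardBetween r A B, F #(I ∩ J) =
      #(powersetCardBetween r A B) • F #(A ∩ J) := by
  rw [sum_congr rfl fun I hI => by rw [inter_eq_of_mem_powersetCardBetween hJ hI], sum_const]

end Counting

/-- `M⁺_{J,I}` as a function of `k = |I ∩ J|`. -/
noncomputable def pinvCoeff (n r k : ℕ) : ℝ :=
  (-1 : ℝ) ^ k * (((r : ℝ) - 2) / ((r : ℝ) - (k : ℝ))) *
    (1 / (Nat.choose (n - 2) (r - k) : ℝ))

lemma cast_choose_succ_succ (N K : ℕ) :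
    ((N + 1).choose (K + 1) : ℝ) = (N + 1) / (K + 1) * N.choose K := by
  rw [div_mul_eq_mul_div, eq_div_iff (by positivity)]
  exact_mod_cast (Nat.add_one_mul_choose_eq N K).symm

lemma cast_choose_ne_zero {N K : ℕ} (h : K ≤ N) : (N.choose K : ℝ) ≠ 0 := by
  exact_mod_cast (Nat.choose_pos h).ne'

section Binomial

/-! The binomial coefficients below count the `r`-sets `I ⊇ J'` with a given `|I ∩ J|`. -/

variable {n r : ℕ}

lemma choose_mul_pinvCoeff_two (hr : 3 ≤ r) (hrn : r ≤ n - 2) :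
    ((n - 2).choose (r - 2) : ℝ) * pinvCoeff n r 2 = 1 := by
  have hr2 : (r : ℝ) - 2 ≠ 0 := by
    rw [sub_ne_zero]; exact_mod_cast (by omega : r ≠ 2)
  have := cast_choose_ne_zero (N := n - 2) (K := r - 2) (by omega)
  simp only [pinvCoeff]
  push_cast
  field_simp

lemma pinvCoeff_cancel_of_card_inter_eq_one (hr : 3 ≤ r) (hrn : r ≤ n - 2) :
    ((n - 3).choose (r - 3) : ℝ) * pinvCoeff n r 2 +
      (n - 3).choose (r - 2) * pinvCoeff n r 1 = 0 := by
  obtain ⟨s, rfl⟩ : ∃ s, r = s + 3 := ⟨r - 3, by omega⟩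
  obtain ⟨t, rfl⟩ : ∃ t, n = s + t + 5 := ⟨n - s - 5, by omega⟩
  simp only [pinvCoeff, show s + t + 5 - 3 = s + t + 2 by omega,
    show s + t + 5 - 2 = s + t + 2 + 1 by omega, show s + 3 - 3 = s by omega,
    show s + 3 - 2 = s + 1 by omega, show s + 3 - 1 = s + 1 + 1 by omega]
  rw [cast_choose_succ_succ (s + t + 2) s, cast_choose_succ_succ (s + t + 2) (s + 1)]
  have := cast_choose_ne_zero (N := s + t + 2) (K := s) (by omega)
  have := cast_choose_ne_zero (N := s + t + 2) (K := s + 1) (by omega)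
  push_cast
  rw [show (s : ℝ) + 3 - 2 = s + 1 by ring, show (s : ℝ) + 3 - 1 = s + 1 + 1 by ring]
  field_simp
  ring

lemma pinvCoeff_cancel_of_disjoint (hr : 4 ≤ r) (hrn : r ≤ n - 2) :
    ((n - 4).choose (r - 4) : ℝ) * pinvCoeff n r 2 + 2 * (n - 4).choose (r - 3) * pinvCoeff n r 1
      + (n - 4).choose (r - 2) * pinvCoeff n r 0 = 0 := by
  obtain ⟨s, rfl⟩ : ∃ s, r = s + 4 := ⟨r - 4, by omega⟩
  obtain ⟨t, rfl⟩ : ∃ t, n = s + t + 6 := ⟨n - s - 6, by omega⟩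
  simp only [pinvCoeff, show s + t + 6 - 4 = s + t + 2 by omega,
    show s + t + 6 - 2 = s + t + 2 + 1 + 1 by omega, show s + 4 - 4 = s by omega,
    show s + 4 - 3 = s + 1 by omega, show s + 4 - 2 = s + 1 + 1 by omega,
    show s + 4 - 1 = s + 1 + 1 + 1 by omega, show s + 4 - 0 = s + 2 + 1 + 1 by omega]
  rw [cast_choose_succ_succ (s + t + 2 + 1) (s + 1), cast_choose_succ_succ (s + t + 2) s,
    cast_choose_succ_succ (s + t + 2 + 1) (s + 1 + 1), cast_choose_succ_succ (s + t + 2) (s + 1),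
    cast_choose_succ_succ (s + t + 2 + 1) (s + 2 + 1), cast_choose_succ_succ (s + t + 2) (s + 2)]
  have := cast_choose_ne_zero (N := s + t + 2) (K := s) (by omega)
  have := cast_choose_ne_zero (N := s + t + 2) (K := s + 1) (by omega)
  have := cast_choose_ne_zero (N := s + t + 2) (K := s + 1 + 1) (by omega)
  push_cast
  rw [show (s : ℝ) + 4 - 2 = s + 1 + 1 by ring, show (s : ℝ) + 4 - 1 = s + 1 + 1 + 1 by ring,
    sub_zero]
  field_simp
  ring

lemma pinvCoeff_cancel_of_disjoint_of_eq_three (hrn : 3 ≤ n - 2) :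
    2 * pinvCoeff n 3 1 + ((n - 4 : ℕ) : ℝ) * pinvCoeff n 3 0 = 0 := by
  obtain ⟨t, rfl⟩ : ∃ t, n = t + 5 := ⟨n - 5, by omega⟩
  simp only [pinvCoeff, show t + 5 - 4 = t + 1 by omega, show t + 5 - 2 = t + 2 + 1 by omega,
    show 3 - 0 = 2 + 1 by omega]
  rw [cast_choose_succ_succ (t + 2) 2, Nat.cast_choose_two, Nat.cast_choose_two]
  push_cast
  ring_nf
  field_simp
  ring

end Binomial

section Cases

variable {α : Type*} [Fintype α] [DecidableEq α] {r : ℕ} {J J' : Finset α}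

lemma sum_pinvCoeff_card_inter_self (hJ : #J = 2) (hr : 3 ≤ r) (hrn : r ≤ Fintype.card α - 2) :
    ∑ I ∈ powersetCardBetween r J ∅, pinvCoeff (Fintype.card α) r #(I ∩ J) = 1 := by
  rw [sum_powersetCardBetween_card_inter _ subset_union_left,
    card_powersetCardBetween (disjoint_empty_right _) (by omega), inter_self, hJ, card_empty,
    Nat.sub_zero, nsmul_eq_mul]
  exact choose_mul_pinvCoeff_two hr hrn

lemma sum_pinvCoeff_card_inter_of_card_inter_eq_one (hJ : #J = 2) (hJ' : #J' = 2)
    (hJJ' : #(J' ∩ J) = 1) (hr : 3 ≤ r) (hrn : r ≤ Fintype.card α - 2) :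
    ∑ I ∈ powersetCardBetween r J' ∅, pinvCoeff (Fintype.card α) r #(I ∩ J) = 0 := by
  obtain ⟨b, hb⟩ : ∃ b, J \ J' = {b} := card_eq_one.1 (by rw [card_sdiff, hJ, hJJ'])
  have hbJ : b ∈ J := (mem_sdiff.1 (hb ▸ mem_singleton_self b)).1
  have hbJ' : b ∉ J' := (mem_sdiff.1 (hb ▸ mem_singleton_self b)).2
  have hJsub : J ⊆ insert b J' := by
    intro x hx
    by_cases hxJ' : x ∈ J'
    · exact mem_insert_of_mem hxJ'
    · rw [mem_insert, ← mem_singleton, ← hb, mem_sdiff]; exact Or.inl ⟨hx, hxJ'⟩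
  rw [sum_powersetCardBetween_split _ b, insert_empty,
    sum_powersetCardBetween_card_inter _ (hJsub.trans subset_union_left),
    sum_powersetCardBetween_card_inter _ (by rwa [union_comm, ← insert_eq]),
    card_powersetCardBetween (disjoint_empty_right _) (by rw [card_insert_of_notMem hbJ']; omega),
    card_powersetCardBetween (disjoint_singleton_right.2 hbJ') (by omega),
    insert_inter_of_mem hbJ, card_insert_of_notMem (fun h => hbJ' (mem_inter.1 h).1), hJJ',
    card_insert_of_notMem hbJ', hJ', card_empty, card_singleton]
  simp only [nsmul_eq_mul, Nat.sub_zero, Nat.sub_sub]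
  exact pinvCoeff_cancel_of_card_inter_eq_one hr hrn

lemma sum_pinvCoeff_card_inter_of_disjoint (hJ : #J = 2) (hJ' : #J' = 2) (hJJ' : Disjoint J' J)
    (hr : 3 ≤ r) (hrn : r ≤ Fintype.card α - 2) :
    ∑ I ∈ powersetCardBetween r J' ∅, pinvCoeff (Fintype.card α) r #(I ∩ J) = 0 := by
  obtain ⟨a, b, hab, rfl⟩ := card_eq_two.1 hJ
  have ha : a ∈ ({a, b} : Finset α) := mem_insert_self a {b}
  have hb : b ∈ ({a, b} : Finset α) := mem_insert_of_mem (mem_singleton_self b)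
  have haJ' : a ∉ J' := disjoint_right.1 hJJ' ha
  have hbJ' : b ∉ J' := disjoint_right.1 hJJ' hb
  have hJ'ab : J' ∩ {a, b} = ∅ := disjoint_iff_inter_eq_empty.1 hJJ'
  rw [sum_powersetCardBetween_split _ a, insert_empty,
    sum_powersetCardBetween_split (A := insert a J') _ b,
    sum_powersetCardBetween_split (A := J') (B := {a}) _ b]
  rw [sum_powersetCardBetween_card_inter _ (by intro x; simp; tauto),
    sum_powersetCardBetween_card_inter _ (by intro x; simp; tauto),
    sum_powersetCardBetween_card_inter _ (by intro x; simp; tauto),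
    sum_powersetCardBetween_card_inter _ (by intro x; simp; tauto)]
  have hbaJ' : b ∉ insert a J' := by simp [hab.symm, hbJ']
  simp only [insert_empty, insert_inter_of_mem ha, insert_inter_of_mem hb, hJ'ab,
    card_pair hab.symm, card_singleton, card_empty]
  have h4 : #(insert b (insert a J')) = 4 := by
    rw [card_insert_of_notMem hbaJ', card_insert_of_notMem haJ', hJ']
  have h3a : #(insert a J') = 3 := by rw [card_insert_of_notMem haJ', hJ']
  have h3b : #(insert b J') = 3 := by rw [card_insert_of_notMem hbJ', hJ']
  rw [card_powersetCardBetween (A := insert a J') (disjoint_singleton_right.2 hbaJ') (by omega),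
    card_powersetCardBetween (A := insert b J') (by simp [hab, haJ']) (by omega),
    card_powersetCardBetween (A := J') (by simp [haJ', hbJ']) (by omega),
    h3a, h3b, hJ', card_pair hab.symm]
  simp only [card_singleton, nsmul_eq_mul, Nat.sub_sub]
  rcases lt_or_ge r 4 with hr4 | hr4
  · -- `r = 3`: no `r`-set contains the four points of `J' ∪ J`, and the binomial formula
    -- would wrongly give `C(n - 4, 0) = 1` for them
    obtain rfl : r = 3 := by omega
    rw [powersetCardBetween_eq_empty (h4 ▸ hr4), card_empty]
    simp only [Nat.cast_zero, zero_mul, zero_add, Nat.sub_self, Nat.choose_zero_right,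
      Nat.reduceSub, Nat.reduceAdd, Nat.choose_one_right, Nat.cast_one]
    linear_combination pinvCoeff_cancel_of_disjoint_of_eq_three hrn
  · rw [card_powersetCardBetween (disjoint_empty_right _) (h4 ▸ hr4), h4, card_empty]
    linear_combination pinvCoeff_cancel_of_disjoint hr4 hrn

lemma sum_pinvCoeff_card_inter (hJ : #J = 2) (hJ' : #J' = 2) (hr : 3 ≤ r)
    (hrn : r ≤ Fintype.card α - 2) :
    ∑ I ∈ powersetCardBetween r J' ∅, pinvCoeff (Fintype.card α) r #(I ∩ J) =
      if J = J' then 1 else 0 := by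
  split_ifs with hJJ'
  · subst hJJ'
    exact sum_pinvCoeff_card_inter_self hJ hr hrn
  have hlt : #(J' ∩ J) < 2 := by
    refine lt_of_le_of_ne (hJ' ▸ card_le_card inter_subset_left) fun h => hJJ' ?_
    have hJ'J : J' ∩ J = J' := eq_of_subset_of_card_le inter_subset_left (by rw [h, hJ'])
    rw [← hJ'J, eq_of_subset_of_card_le inter_subset_right (by rw [h, hJ])]
  obtain h | h : #(J' ∩ J) = 0 ∨ #(J' ∩ J) = 1 := by omega
  · exact sum_pinvCoeff_card_inter_of_disjoint hJ hJ'
      (disjoint_iff_inter_eq_empty.2 (card_eq_zero.1 h)) hr hrn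
  · exact sum_pinvCoeff_card_inter_of_card_inter_eq_one hJ hJ' h hr hrn

end Cases

/-- `M⁺ M = Id` for the incidence matrix `M` between `r`-subsets and `2`-subsets
of `[n]` and the explicit matrix `M⁺`, for `3 ≤ r ≤ n-2`. -/
theorem stmt_3 (n r : ℕ) (hr : 3 ≤ r) (hrn : r ≤ n - 2)
    (M : Matrix {I : Finset (Fin n) // I.card = r} {J : Finset (Fin n) // J.card = 2} ℝ)
    (hM : ∀ I J, M I J = if J.1 ⊆ I.1 then 1 else 0)
    (Mplus : Matrix {J : Finset (Fin n) // J.card = 2} {I : Finset (Fin n) // I.card = r} ℝ)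
    (hMplus : ∀ J I, Mplus J I =
      (-1 : ℝ) ^ ((I.1 ∩ J.1).card) * (((r : ℝ) - 2) / ((r : ℝ) - ((I.1 ∩ J.1).card : ℝ))) *
        (1 / (Nat.choose (n - 2) (r - (I.1 ∩ J.1).card) : ℝ))) :
    Mplus * M = 1 := by
  ext J J'
  have hentry : ∀ I, Mplus J I * M I J' =
      if J'.1 ⊆ I.1 then pinvCoeff n r #(I.1 ∩ J.1) else 0 := by
    intro I
    rw [hM, hMplus, mul_ite, mul_one, mul_zero, pinvCoeff]
  have hsum := sum_pinvCoeff_card_inter J.2 J'.2 hr (by rwa [Fintype.card_fin])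
  rw [Fintype.card_fin, powersetCardBetween_empty_right, sum_filter,
    sum_subtype _ (fun _ => mem_powersetCard_univ)] at hsum
  rw [Matrix.mul_apply, Matrix.one_apply, Fintype.sum_congr _ _ hentry, hsum]
  exact if_congr Subtype.ext_iff.symm rfl rfl
end

section
/- For 2 ≤ r ≤ n-2, the linear map from ℝ^(C(n,2)) to ℝ^(C(n,r)) whose I-th coordinate (for an r-subset I of [n]) is the sum of x_{ij} over all 2-element subsets {i,j} ⊆ I, is injective. Moreover, when r = 2 or r = n-2 this map is bijective. -/
/-!
Let `M` be the inclusion matrix of `k`-sets against `r`-sets of an `n`-set and `M z = 0`. Summing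
the equations `(M z) I = 0` over the `r`-sets `I` avoiding a set `S` counts every `k`-set disjoint
from `S` exactly `C(n - #S - k, r - k)` times, and this is nonzero as long as `#S + r ≤ n`. Hence
for `#S ≤ k ≤ n - r` the values of `z` on the `k`-sets avoiding `S` sum to zero, and
inclusion–exclusion over the subsets `S` of a `k`-set `K` isolates `z K`, which therefore vanishes.
When `C(n, k) = C(n, r)`, injectivity gives bijectivity by counting dimensions.
-/

open Finset Matrix

section InclusionExclusion

variable {ι α R : Type*} [DecidableEq α] [CommRing R]

theorem Finset.filter_disjoint_powerset (K T : Finset α) :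
    {S ∈ K.powerset | Disjoint T S} = (K \ T).powerset := by
  ext S
  simp [subset_sdiff, disjoint_comm]

theorem Finset.sum_filter_subset_eq_sum_powerset (t : Finset ι) (s : ι → Finset α)
    (f : ι → R) (K : Finset α) :
    ∑ i ∈ t with K ⊆ s i, f i =
      ∑ S ∈ K.powerset, (-1) ^ #S * ∑ i ∈ t with Disjoint (s i) S, f i := by
  simp_rw [mul_sum, sum_filter]
  rw [sum_comm]
  refine sum_congr rfl fun i _ => ?_
  have h := congrArg (Int.cast : ℤ → R) (sum_powerset_neg_one_pow_card (x := K \ s i))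
  push_cast at h
  rw [← sum_filter, ← sum_mul, filter_disjoint_powerset]
  simp only [h, sdiff_eq_empty_iff_subset, ite_mul, one_mul, zero_mul]

end InclusionExclusion

def inclusionMatrix (𝕜 α : Type*) [Zero 𝕜] [One 𝕜] [DecidableEq α] (k r : ℕ) :
    Matrix {I : Finset α // #I = r} {J : Finset α // #J = k} 𝕜 :=
  Matrix.of fun I J => if J.1 ⊆ I.1 then 1 else 0

section InclusionMatrix

variable {α : Type*} [Fintype α] [DecidableEq α]

theorem inclusionMatrix_mulVec_apply {𝕜 : Type*} [NonAssocSemiring 𝕜] {k r : ℕ}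
    (z : {J : Finset α // #J = k} → 𝕜) (I : {I : Finset α // #I = r}) :
    (inclusionMatrix 𝕜 α k r *ᵥ z) I = ∑ J, if J.1 ⊆ I.1 then z J else 0 := by
  simp [inclusionMatrix, mulVec, dotProduct]

theorem card_filter_disjoint_superset {k r : ℕ} (hkr : k ≤ r) (S : Finset α)
    (J : {J : Finset α // #J = k}) :
    #{I : {I : Finset α // #I = r} | Disjoint I.1 S ∧ J.1 ⊆ I.1} =
      if Disjoint J.1 S then (Fintype.card α - #S - k).choose (r - k) else 0 := by
  rw [← Fintype.card_subtype, Fintype.card_congr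
    (Equiv.subtypeSubtypeEquivSubtypeInter (#· = r) fun I => Disjoint I S ∧ J.1 ⊆ I),
    Fintype.card_subtype]
  split_ifs with hJS
  · have : ({I | #I = r ∧ Disjoint I S ∧ J.1 ⊆ I} : Finset (Finset α)) =
        {I ∈ powersetCard r Sᶜ | J.1 ⊆ I} := by
      ext I
      simp only [mem_filter, mem_univ, true_and, mem_powersetCard, subset_compl_iff_disjoint_right]
      tauto
    rw [this, card_filter_powersetCard_subset _ _ _ (subset_compl_iff_disjoint_right.2 hJS)
      (J.2.trans_le hkr), card_compl, J.2]
  · rw [card_eq_zero, filter_eq_empty_iff]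
    rintro I - ⟨-, hIS, hJI⟩
    exact hJS (hIS.mono_left hJI)

variable {𝕜 : Type*} [Field 𝕜] [CharZero 𝕜] {k r : ℕ}

theorem sum_disjoint_eq_zero_of_inclusionMatrix_mulVec_eq_zero (hkr : k ≤ r) {S : Finset α}
    (hS : #S + r ≤ Fintype.card α) {z : {J : Finset α // #J = k} → 𝕜}
    (hz : inclusionMatrix 𝕜 α k r *ᵥ z = 0) :
    ∑ J with Disjoint J.1 S, z J = 0 := by
  have hc : ((Fintype.card α - #S - k).choose (r - k) : 𝕜) ≠ 0 :=
    Nat.cast_ne_zero.2 (Nat.choose_pos (by omega)).ne'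
  refine (mul_eq_zero.1 ?_).resolve_left hc
  calc ((Fintype.card α - #S - k).choose (r - k) : 𝕜) * ∑ J with Disjoint J.1 S, z J
      = ∑ J, (#{I : {I : Finset α // #I = r} | Disjoint I.1 S ∧ J.1 ⊆ I.1} : 𝕜) * z J := by
        simp_rw [mul_sum, sum_filter, card_filter_disjoint_superset hkr]
        simp
    _ = ∑ I : {I : Finset α // #I = r} with Disjoint I.1 S,
          ∑ J, if J.1 ⊆ I.1 then z J else 0 := by
        rw [sum_comm]
        simp_rw [← sum_filter, filter_filter, sum_const, nsmul_eq_mul]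
    _ = 0 := by
        simp_rw [← inclusionMatrix_mulVec_apply, hz]
        simp

theorem inclusionMatrix_mulVec_injective (hkr : k ≤ r) (hn : k + r ≤ Fintype.card α) :
    Function.Injective (inclusionMatrix 𝕜 α k r).mulVec := by
  refine (injective_iff_map_eq_zero (inclusionMatrix 𝕜 α k r).mulVecLin).2 fun z hz => ?_
  funext K
  have hsuperset (J : {J : Finset α // #J = k}) : K.1 ⊆ J.1 ↔ K = J :=
    ⟨fun h => Subtype.ext (eq_of_subset_of_card_le h (by rw [J.2, K.2])), fun h => h ▸ subset_rfl⟩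
  calc z K = ∑ J with K.1 ⊆ J.1, z J := by simp_rw [hsuperset, sum_filter, sum_ite_eq]; simp
    _ = ∑ S ∈ K.1.powerset, (-1) ^ #S * ∑ J with Disjoint J.1 S, z J :=
      sum_filter_subset_eq_sum_powerset _ _ _ _
    _ = 0 := sum_eq_zero fun S hS => by
      rw [sum_disjoint_eq_zero_of_inclusionMatrix_mulVec_eq_zero hkr ?_ hz, mul_zero]
      have := card_le_card (mem_powerset.1 hS)
      rw [K.2] at this
      omega

theorem inclusionMatrix_mulVec_bijective (hkr : k ≤ r) (hn : k + r ≤ Fintype.card α)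
    (h : k = r ∨ k + r = Fintype.card α) :
    Function.Bijective (inclusionMatrix 𝕜 α k r).mulVec := by
  have hinj := inclusionMatrix_mulVec_injective (𝕜 := 𝕜) hkr hn
  have hdim : Module.finrank 𝕜 ({J : Finset α // #J = k} → 𝕜) =
      Module.finrank 𝕜 ({I : Finset α // #I = r} → 𝕜) := by
    rw [Module.finrank_fintype_fun_eq_card, Module.finrank_fintype_fun_eq_card,
      Fintype.card_finset_len, Fintype.card_finset_len]
    rcases h with rfl | h
    · rfl
    · exact Nat.choose_symm_of_eq_add h.symm
  exact ⟨hinj, (LinearMap.injective_iff_surjective_of_finrank_eq_finrank hdim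
    (f := (inclusionMatrix 𝕜 α k r).mulVecLin)).1 hinj⟩

end InclusionMatrix

/-- For `2 ≤ r ≤ n-2`, the linear map `ℝ^(C(n,2)) → ℝ^(C(n,r))` whose `I`-coordinate
is `∑_{{i,j} ⊆ I} x_{ij}` is injective; when `r = 2` or `r = n-2` it is bijective. -/
theorem stmt_4 (n r : ℕ) (hr : 2 ≤ r) (hrn : r ≤ n - 2)
    (T : ({J : Finset (Fin n) // J.card = 2} → ℝ) →
         ({I : Finset (Fin n) // I.card = r} → ℝ))
    (hT : ∀ x I, T x I = ∑ J : {J : Finset (Fin n) // J.card = 2},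
      if J.1 ⊆ I.1 then x J else 0) :
    Function.Injective T ∧ ((r = 2 ∨ r = n - 2) → Function.Bijective T) := by
  obtain rfl : T = (inclusionMatrix ℝ (Fin n) 2 r).mulVec := by
    ext x I
    rw [hT, inclusionMatrix_mulVec_apply]
  have hn : 2 + r ≤ Fintype.card (Fin n) := by rw [Fintype.card_fin]; omega
  refine ⟨inclusionMatrix_mulVec_injective hr hn, fun h => ?_⟩
  refine inclusionMatrix_mulVec_bijective hr hn (h.imp Eq.symm fun h => ?_)
  rw [Fintype.card_fin]; omega
end

section
/- Under the monomial ring homomorphism φ* from the Laurent polynomial ring k[x_I^±] (I ranging over r-subsets of [n]) to k[x_{ij}^±] ({i,j} ranging over 2-subsets of [n]) sending x_I to the product of x_{ij} over all 2-subsets {i,j} ⊆ I, each three-term Plücker relation x_{ijA}x_{klA} − x_{ikA}x_{jlA} + x_{ilA}x_{jkA} (for i<j<k<l and A an (r−2)-subset of [n] disjoint from {i,j,k,l}) is sent to (x_{ij}x_{kl} − x_{ik}x_{jl} + x_{il}x_{jk}) times the monomial ∏_{B ⊆ A, |B|=2} x_B² · ∏_{t ∈ A} x_{it}x_{jt}x_{kt}x_{lt}.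 -/
open scoped BigOperators

/-- The Laurent polynomial ring over `k` in variables indexed by the `r`-element
subsets of `[n]`, realized as the group algebra of the free abelian group on those
variables. -/
abbrev LaurentRing (k : Type*) [Field k] (n r : ℕ) :=
  AddMonoidAlgebra k ({S : Finset (Fin n) // S.card = r} →₀ ℤ)

/-- The variable `x_S` of the Laurent ring, for an `r`-subset `S` of `[n]`. -/
noncomputable def Xvar (k : Type*) [Field k] (n r : ℕ) (S : Finset (Fin n))
    (h : S.card = r) : LaurentRing k n r :=
  AddMonoidAlgebra.single (Finsupp.single (⟨S, h⟩ : {S : Finset (Fin n) // S.card = r}) 1) 1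

/-- The exponent map underlying the monomial homomorphism `φ*`: the exponent vector `g`
on `r`-subset variables is sent to the exponent vector on `2`-subset variables obtained
by replacing each `e_I` with `∑_{J ⊆ I, |J| = 2} e_J`. -/
noncomputable def expMap (n r : ℕ) (g : {S : Finset (Fin n) // S.card = r} →₀ ℤ) :
    {T : Finset (Fin n) // T.card = 2} →₀ ℤ :=
  g.sum fun I z => z •
    ∑ J ∈ (I.1.powersetCard 2).attach,
      Finsupp.single
        (⟨J.1, (Finset.mem_powersetCard.mp J.2).2⟩ : {T : Finset (Fin n) // T.card = 2})
        (1 : ℤ)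

/-! `φ*` sends each variable to a monomial, `x_S ↦ ∏_{J ⊆ S, |J| = 2} x_J`, so everything is a
computation with exponent vectors. For `p ≠ q` outside `A`, the `2`-subsets of `{p, q} ∪ A` are
`{p, q}`, the `2`-subsets of `A`, and the pairs `{p, t}`, `{q, t}` with `t ∈ A`. Hence for each of
the three splittings `{p, q} ⊔ {s, u}` of `{i, j, k, l}` the image of `x_{pqA} x_{suA}` is
`x_{pq} x_{su}` times the same monomial `∏_B x_B² · ∏_t x_{it} x_{jt} x_{kt} x_{lt}`. -/

open Finset AddMonoidAlgebra

section Exponents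

variable {α : Type*} [DecidableEq α]

/-- The exponent vector of `x_T`; it is `0` when `T` is not a `2`-subset. -/
noncomputable def pairExp (T : Finset α) : {T : Finset α // T.card = 2} →₀ ℤ :=
  if h : T.card = 2 then Finsupp.single ⟨T, h⟩ 1 else 0

/-- The exponent vector of `φ* x_S = ∏_{J ⊆ S, |J| = 2} x_J`. -/
noncomputable def subsetExp (S : Finset α) : {T : Finset α // T.card = 2} →₀ ℤ :=
  ∑ J ∈ S.powersetCard 2, pairExp J

theorem subsetExp_insert {x : α} {s : Finset α} (hx : x ∉ s) :
    subsetExp (insert x s) = subsetExp s + ∑ t ∈ s, pairExp {x, t} := by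
  have hxJ : ∀ J ∈ s.powersetCard 1, x ∉ J := fun J hJ hxJ =>
    hx ((mem_powersetCard.mp hJ).1 hxJ)
  rw [subsetExp, powersetCard_succ_insert hx, sum_union, sum_image, powersetCard_one, sum_map]
  · rfl
  · intro J hJ J' hJ' h
    rw [← erase_insert (hxJ J hJ), h, erase_insert (hxJ J' hJ')]
  · refine disjoint_left.mpr fun J hJ hJ' => ?_
    obtain ⟨J', -, rfl⟩ := mem_image.mp hJ'
    exact hx ((mem_powersetCard.mp hJ).1 (mem_insert_self x J'))

theorem subsetExp_insert_insert {p q : α} {A : Finset α} (hpq : p ≠ q) (hp : p ∉ A)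
    (hq : q ∉ A) :
    subsetExp (insert p (insert q A)) =
      pairExp {p, q} + subsetExp A + ∑ t ∈ A, pairExp {p, t} + ∑ t ∈ A, pairExp {q, t} := by
  rw [subsetExp_insert (by simp [hpq, hp]), subsetExp_insert hq, sum_insert hq]
  abel

end Exponents

theorem expMap_single_one (n r : ℕ) (S : Finset (Fin n)) (hS : S.card = r) :
    expMap n r (Finsupp.single ⟨S, hS⟩ 1) = subsetExp S := by
  simp only [expMap, zero_smul, Finsupp.sum_single_index, one_smul]
  rw [subsetExp, ← sum_attach (S.powersetCard 2) pairExp]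
  exact sum_congr rfl fun J _ => by rw [pairExp, dif_pos]

theorem Xvar_two_eq_single (k : Type*) [Field k] (n : ℕ) (T : Finset (Fin n)) (hT : T.card = 2) :
    Xvar k n 2 T hT = single (pairExp T) 1 := by
  rw [pairExp, dif_pos hT, Xvar]

theorem map_Xvar_mul_Xvar (k : Type*) [Field k] (n r : ℕ)
    (φ : LaurentRing k n r →ₐ[k] LaurentRing k n 2)
    (hφ : ∀ g, φ (single g 1) = single (expMap n r g) 1)
    (S S' : Finset (Fin n)) (hS : S.card = r) (hS' : S'.card = r) :
    φ (Xvar k n r S hS * Xvar k n r S' hS') = single (subsetExp S + subsetExp S') 1 := by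
  rw [map_mul, Xvar, Xvar, hφ, hφ, expMap_single_one, expMap_single_one, single_mul_single,
    one_mul]

theorem stmt_9_general (k : Type*) [Field k] (n r : ℕ)
    (φ : LaurentRing k n r →ₐ[k] LaurentRing k n 2)
    (hφ : ∀ g, φ (AddMonoidAlgebra.single g 1) = AddMonoidAlgebra.single (expMap n r g) 1)
    (i j l m : Fin n)
    (A : Finset (Fin n))
    (hdisj : Disjoint A ({i, j, l, m} : Finset (Fin n)))
    (hijA : (insert i (insert j A)).card = r)
    (hlmA : (insert l (insert m A)).card = r)
    (hilA : (insert i (insert l A)).card = r)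
    (hjmA : (insert j (insert m A)).card = r)
    (himA : (insert i (insert m A)).card = r)
    (hjlA : (insert j (insert l A)).card = r)
    (hij2 : ({i, j} : Finset (Fin n)).card = 2)
    (hlm2 : ({l, m} : Finset (Fin n)).card = 2)
    (hil2 : ({i, l} : Finset (Fin n)).card = 2)
    (hjm2 : ({j, m} : Finset (Fin n)).card = 2)
    (him2 : ({i, m} : Finset (Fin n)).card = 2)
    (hjl2 : ({j, l} : Finset (Fin n)).card = 2)
    (hit : ∀ t ∈ A, ({i, t} : Finset (Fin n)).card = 2)
    (hjt : ∀ t ∈ A, ({j, t} : Finset (Fin n)).card = 2)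
    (hlt : ∀ t ∈ A, ({l, t} : Finset (Fin n)).card = 2)
    (hmt : ∀ t ∈ A, ({m, t} : Finset (Fin n)).card = 2) :
    φ (Xvar k n r _ hijA * Xvar k n r _ hlmA
        - Xvar k n r _ hilA * Xvar k n r _ hjmA
        + Xvar k n r _ himA * Xvar k n r _ hjlA) =
      (Xvar k n 2 _ hij2 * Xvar k n 2 _ hlm2
        - Xvar k n 2 _ hil2 * Xvar k n 2 _ hjm2
        + Xvar k n 2 _ him2 * Xvar k n 2 _ hjl2) *
      ((∏ B ∈ (A.powersetCard 2).attach,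
          (Xvar k n 2 B.1 (Finset.mem_powersetCard.mp B.2).2) ^ 2) *
       ∏ t ∈ A.attach,
          Xvar k n 2 _ (hit t.1 t.2) * Xvar k n 2 _ (hjt t.1 t.2) *
          Xvar k n 2 _ (hlt t.1 t.2) * Xvar k n 2 _ (hmt t.1 t.2)) := by
  have hi : i ∉ A := disjoint_right.mp hdisj (by simp)
  have hj : j ∉ A := disjoint_right.mp hdisj (by simp)
  have hl : l ∉ A := disjoint_right.mp hdisj (by simp)
  have hm : m ∉ A := disjoint_right.mp hdisj (by simp)
  rw [map_add, map_sub, map_Xvar_mul_Xvar k n r φ hφ, map_Xvar_mul_Xvar k n r φ hφ,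
    map_Xvar_mul_Xvar k n r φ hφ]
  simp only [Xvar_two_eq_single, single_mul_single, single_pow, prod_single, one_mul, one_pow,
    prod_const_one, add_mul, sub_mul, sum_add_distrib]
  rw [sum_attach (powersetCard 2 A) (fun B => 2 • pairExp B), ← smul_sum, ← subsetExp,
    sum_attach A (fun t => pairExp {i, t}), sum_attach A (fun t => pairExp {j, t}),
    sum_attach A (fun t => pairExp {l, t}), sum_attach A (fun t => pairExp {m, t}),
    subsetExp_insert_insert (card_pair_eq_two_iff.mp hij2) hi hj,
    subsetExp_insert_insert (card_pair_eq_two_iff.mp hlm2) hl hm,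
    subsetExp_insert_insert (card_pair_eq_two_iff.mp hil2) hi hl,
    subsetExp_insert_insert (card_pair_eq_two_iff.mp hjm2) hj hm,
    subsetExp_insert_insert (card_pair_eq_two_iff.mp him2) hi hm,
    subsetExp_insert_insert (card_pair_eq_two_iff.mp hjl2) hj hl]
  refine congrArg₂ (· + ·) (congrArg₂ (· - ·) ?_ ?_) ?_ <;> congr 1 <;> abel

/-- Under the monomial homomorphism `φ*` sending `x_I ↦ ∏_{{i,j} ⊆ I} x_{ij}`, the
three-term Plücker relation `x_{ijA}x_{klA} − x_{ikA}x_{jlA} + x_{ilA}x_{jkA}` is sent to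
`(x_{ij}x_{kl} − x_{ik}x_{jl} + x_{il}x_{jk}) · ∏_{B ⊆ A, |B|=2} x_B² ·
∏_{t ∈ A} x_{it}x_{jt}x_{kt}x_{lt}`. -/
theorem stmt_9 (k : Type*) [Field k] (n r : ℕ) (hr : 2 ≤ r) (hrn : r ≤ n)
    (φ : LaurentRing k n r →ₐ[k] LaurentRing k n 2)
    (hφ : ∀ g, φ (AddMonoidAlgebra.single g 1) = AddMonoidAlgebra.single (expMap n r g) 1)
    (i j l m : Fin n) (hij : i < j) (hjl : j < l) (hlm : l < m)
    (A : Finset (Fin n)) (hA : A.card = r - 2)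
    (hdisj : Disjoint A ({i, j, l, m} : Finset (Fin n)))
    (hijA : (insert i (insert j A)).card = r)
    (hlmA : (insert l (insert m A)).card = r)
    (hilA : (insert i (insert l A)).card = r)
    (hjmA : (insert j (insert m A)).card = r)
    (himA : (insert i (insert m A)).card = r)
    (hjlA : (insert j (insert l A)).card = r)
    (hij2 : ({i, j} : Finset (Fin n)).card = 2)
    (hlm2 : ({l, m} : Finset (Fin n)).card = 2)
    (hil2 : ({i, l} : Finset (Fin n)).card = 2)
    (hjm2 : ({j, m} : Finset (Fin n)).card = 2)
    (him2 : ({i, m} : Finset (Fin n)).card = 2)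
    (hjl2 : ({j, l} : Finset (Fin n)).card = 2)
    (hit : ∀ t ∈ A, ({i, t} : Finset (Fin n)).card = 2)
    (hjt : ∀ t ∈ A, ({j, t} : Finset (Fin n)).card = 2)
    (hlt : ∀ t ∈ A, ({l, t} : Finset (Fin n)).card = 2)
    (hmt : ∀ t ∈ A, ({m, t} : Finset (Fin n)).card = 2) :
    φ (Xvar k n r _ hijA * Xvar k n r _ hlmA
        - Xvar k n r _ hilA * Xvar k n r _ hjmA
        + Xvar k n r _ himA * Xvar k n r _ hjlA) =
      (Xvar k n 2 _ hij2 * Xvar k n 2 _ hlm2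
        - Xvar k n 2 _ hil2 * Xvar k n 2 _ hjm2
        + Xvar k n 2 _ him2 * Xvar k n 2 _ hjl2) *
      ((∏ B ∈ (A.powersetCard 2).attach,
          (Xvar k n 2 B.1 (Finset.mem_powersetCard.mp B.2).2) ^ 2) *
       ∏ t ∈ A.attach,
          Xvar k n 2 _ (hit t.1 t.2) * Xvar k n 2 _ (hjt t.1 t.2) *
          Xvar k n 2 _ (hlt t.1 t.2) * Xvar k n 2 _ (hmt t.1 t.2)) :=
  stmt_9_general k n r φ hφ i j l m A hdisj hijA hlmA hilA hjmA himA hjlA hij2 hlm2 hil2 hjm2 him2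
    hjl2 hit hjt hlt hmt
end

section
/- Applying the degree-(r−1) Veronese map to each column of a 2×n matrix yields an r×n matrix whose maximal minor on columns indexed by an r-subset I equals ∏_{i<j, i,j ∈ I} (x_i y_j − x_j y_i), i.e., the product of the 2×2 minors of the original matrix over all pairs of columns in I. -/
theorem Matrix.transpose_veronese_eq_projVandermonde {R : Type*} [CommRing R] {r : ℕ}
    (u v : Fin r → R) :
    (Matrix.of fun a b : Fin r => u b ^ (r - 1 - (a : ℕ)) * v b ^ (a : ℕ)).transpose =
      Matrix.projVandermonde v u := by
  ext b a
  rw [Matrix.projVandermonde_apply, Fin.val_rev, Matrix.transpose_apply, Matrix.of_apply,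
    mul_comm]
  congr 2
  omega

theorem stmt_10_general (R : Type*) [CommRing R] (n r : ℕ) (x y : Fin n → R)
    (e : Fin r → Fin n) :
    Matrix.det (Matrix.of fun a b : Fin r =>
        x (e b) ^ (r - 1 - (a : ℕ)) * y (e b) ^ (a : ℕ)) =
      ∏ i : Fin r, ∏ j ∈ Finset.Ioi i, (x (e i) * y (e j) - x (e j) * y (e i)) := by
  rw [← Matrix.det_transpose, Matrix.transpose_veronese_eq_projVandermonde,
    Matrix.det_projVandermonde]
  simp only [mul_comm (y _)]

/-- Applying the degree-`(r−1)` Veronese map to each column of the `2×n` matrix with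
columns `(x_b, y_b)ᵀ` gives the `r×n` matrix with entries `x_b^{r-1-a} y_b^a`.  The
maximal minor on the columns of an `r`-subset `I` of `[n]` (given by a strictly
monotone `e : Fin r → Fin n`) equals the product of the `2×2` minors
`∏_{i<j, i,j ∈ I} (x_i y_j − x_j y_i)` of the original matrix. -/
theorem stmt_10 (R : Type*) [CommRing R] (n r : ℕ) (x y : Fin n → R)
    (e : Fin r → Fin n) (he : StrictMono e) :
    Matrix.det (Matrix.of fun a b : Fin r =>
        x (e b) ^ (r - 1 - (a : ℕ)) * y (e b) ^ (a : ℕ)) =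
      ∏ i : Fin r, ∏ j ∈ Finset.Ioi i, (x (e i) * y (e j) - x (e j) * y (e i)) :=
  stmt_10_general R n r x y e
end

section
/- Let 3 ≤ r ≤ n−3 and fix an r-subset I of [n]. Let K = {a < b < c} be the three smallest elements of I and suppose there exist d, e, f ∈ [n] \ I with d < e < f and a < d, b < e, c < f. Then the eight sets {a,b,c}, {a,b,f}, {a,e,c}, {a,e,f}, {b,d,c}, {b,d,f}, {c,d,e}, {d,e,f} form a cube subgraph of the graph on 3-subsets of {a,b,c,d,e,f} (adjacency = intersection of size 2), and {a,b,c} is the lexicographically smallest of the eight vertices. -/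
/-!
Put `lo = (a, b, c)` and `hi = (d, e, f)` and let the vertex of `x ∈ {0,1}³` take `hi i` or
`lo i` in coordinate `i` according to `x i`. Because `d, e ∉ I ⊇ {a, b, c}` and the orderings
separate every other pair, the six labels are distinct. So two vertices share exactly the
labels of the coordinates where they agree: they meet in two elements iff they differ in
exactly one coordinate, and distinct `x` give distinct sets. For the lexicographic claim,
look at the first coordinate where `x` is `1`: there the sorted list of `g x` has an element
larger than the corresponding one of `[a, b, c]`, and it agrees with `[a, b, c]` before it.
-/

open Finset Function

namespace Cube

variable {ι α : Type*}

def label (lo hi : ι → α) (p : ι × Bool) : α := if p.2 then hi p.1 else lo p.1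

theorem label_injective {lo hi : ι → α} (hlo : Injective lo) (hhi : Injective hi)
    (hdisj : ∀ i j, lo i ≠ hi j) : Injective (label lo hi) := by
  rintro ⟨i, _ | _⟩ ⟨j, _ | _⟩ h <;> simp only [label] at h
  · rw [hlo h]
  · exact absurd h (hdisj i j)
  · exact absurd h.symm (hdisj j i)
  · rw [hhi h]

variable [Fintype ι] [DecidableEq α] {lo hi : ι → α}

def vertex (lo hi : ι → α) (x : ι → Bool) : Finset α :=
  univ.image fun i => label lo hi (i, x i)

theorem mem_vertex {x : ι → Bool} {z : α} :
    z ∈ vertex lo hi x ↔ ∃ i, label lo hi (i, x i) = z := by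
  simp [vertex]

theorem vertex_injective (h : Injective (label lo hi)) : Injective (vertex lo hi) := by
  intro x y hxy
  funext i
  obtain ⟨j, hj⟩ := mem_vertex.1 (hxy ▸ mem_vertex.2 ⟨i, rfl⟩)
  obtain ⟨rfl, hyx⟩ := Prod.mk.inj (h hj)
  exact hyx.symm

theorem vertex_inter_vertex (h : Injective (label lo hi)) (x y : ι → Bool) :
    vertex lo hi x ∩ vertex lo hi y =
      ({i | x i = y i} : Finset ι).image fun i => label lo hi (i, x i) := by
  ext z
  simp only [mem_inter, mem_vertex, mem_image, mem_filter_univ]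
  constructor
  · rintro ⟨⟨i, rfl⟩, j, hj⟩
    obtain ⟨rfl, hxy⟩ := Prod.mk.inj (h hj)
    exact ⟨j, hxy.symm, rfl⟩
  · rintro ⟨i, hi, rfl⟩
    exact ⟨⟨i, rfl⟩, i, by rw [hi]⟩

theorem card_vertex_inter_vertex (h : Injective (label lo hi)) (x y : ι → Bool) :
    #(vertex lo hi x ∩ vertex lo hi y) = #{i | x i = y i} := by
  rw [vertex_inter_vertex h, card_image_of_injective]
  exact h.comp fun i j hij => congrArg Prod.fst hij

theorem vertex_fin_three (lo hi : Fin 3 → α) (x : Fin 3 → Bool) :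
    vertex lo hi x =
      {if x 0 then hi 0 else lo 0, if x 1 then hi 1 else lo 1, if x 2 then hi 2 else lo 2} := by
  simp [vertex, label, Fin.univ_image_def, List.ofFn_succ]

end Cube

theorem card_filter_add_one_eq_card_iff {ι : Type*} [Fintype ι] (p : ι → Prop) [DecidablePred p] :
    #{i | p i} + 1 = Fintype.card ι ↔ ∃! i, ¬ p i := by
  have hsplit : #{i | p i} + #{i | ¬ p i} = Fintype.card ι :=
    card_filter_add_card_filter_not (s := univ) p
  rw [Fintype.existsUnique_iff_card_one]
  omega

theorem range_triple {α : Type*} [DecidableEq α] (a b c d e f : α) :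
    Set.range (fun x : Fin 3 → Bool =>
      ({if x 0 then d else a, if x 1 then e else b, if x 2 then f else c} : Finset α)) =
    {{a, b, c}, {a, b, f}, {a, e, c}, {a, e, f}, {d, b, c}, {d, b, f}, {d, e, c}, {d, e, f}} := by
  ext s
  constructor
  · rintro ⟨x, rfl⟩
    dsimp only
    cases x 0 <;> cases x 1 <;> cases x 2 <;> simp
  · rintro (rfl | rfl | rfl | rfl | rfl | rfl | rfl | rfl)
    exacts [⟨![false, false, false], rfl⟩, ⟨![false, false, true], rfl⟩,
      ⟨![false, true, false], rfl⟩, ⟨![false, true, true], rfl⟩,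
      ⟨![true, false, false], rfl⟩, ⟨![true, false, true], rfl⟩,
      ⟨![true, true, false], rfl⟩, ⟨![true, true, true], rfl⟩]

section Lex

variable {α : Type*} [LinearOrder α]

theorem sort_insert_of_forall_lt {u : α} {s : Finset α} (hu : ∀ y ∈ s, u < y) :
    (insert u s).sort (· ≤ ·) = u :: s.sort (· ≤ ·) :=
  sort_insert _ (fun y hy => (hu y hy).le) fun h => lt_irrefl u (hu u h)

theorem lex_cons_sort_of_forall_lt {u : α} (l : List α) {t : Finset α} (ht : t.Nonempty)
    (hu : ∀ y ∈ t, u < y) : List.Lex (· < ·) (u :: l) (t.sort (· ≤ ·)) := by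
  obtain ⟨v, hv⟩ := ht
  obtain ⟨w, rest, hw⟩ :=
    List.exists_cons_of_ne_nil (List.ne_nil_of_mem ((mem_sort (· ≤ ·)).2 hv))
  rw [hw]
  exact List.Lex.rel (hu w ((mem_sort _).1 (hw ▸ List.mem_cons_self)))

theorem lex_sort_lt_sort_of_raise {a b c d e f : α} (hab : a < b) (hbc : b < c) (had : a < d)
    (hbe : b < e) (hcf : c < f) {x : Fin 3 → Bool} (hx : x ≠ fun _ => false) :
    List.Lex (· < ·) (({a, b, c} : Finset α).sort (· ≤ ·))
      (({if x 0 then d else a, if x 1 then e else b, if x 2 then f else c} : Finset α).sort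
        (· ≤ ·)) := by
  have hsort (u v : α) (huv : u < v) : ({u, v} : Finset α).sort (· ≤ ·) = [u, v] := by
    rw [sort_insert_of_forall_lt (by simpa), sort_singleton]
  rw [sort_insert_of_forall_lt (by simp [hab, hab.trans hbc]), hsort b c hbc]
  cases hx0 : x 0
  · rw [if_neg (by simp), sort_insert_of_forall_lt (by
      simp only [mem_insert, mem_singleton, forall_eq_or_imp, forall_eq]
      constructor <;> split_ifs <;> order)]
    refine List.Lex.cons ?_
    cases hx1 : x 1
    · have hx2 : x 2 = true := by
        by_contra h
        exact hx (funext fun i => by fin_cases i <;> simp_all)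
      rw [if_neg (by simp), hx2, if_pos rfl, hsort b f (hbc.trans hcf)]
      exact List.Lex.cons (List.Lex.rel hcf)
    · refine lex_cons_sort_of_forall_lt _ (insert_nonempty _ _) ?_
      simp only [↓reduceIte, mem_insert, mem_singleton, forall_eq_or_imp, forall_eq]
      exact ⟨hbe, by split_ifs <;> order⟩
  · refine lex_cons_sort_of_forall_lt _ (insert_nonempty _ _) ?_
    simp only [↓reduceIte, mem_insert, mem_singleton, forall_eq_or_imp, forall_eq]
    refine ⟨had, ?_, ?_⟩ <;> split_ifs <;> order

end Lex

theorem stmt_12_general (I : Finset ℕ)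
    (a b c d e f : ℕ)
    (hab : a < b) (hbc : b < c) (hde : d < e) (hef : e < f)
    (had : a < d) (hbe : b < e) (hcf : c < f)
    (habcI : ({a, b, c} : Finset ℕ) ⊆ I)
    (hdI : d ∉ I) (heI : e ∉ I)
    (g : (Fin 3 → Bool) → Finset ℕ)
    (hg : ∀ x, g x = {if x 0 then d else a, if x 1 then e else b, if x 2 then f else c}) :
    Function.Injective g ∧
    Set.range g = ({{a, b, c}, {a, b, f}, {a, e, c}, {a, e, f},
                    {b, d, c}, {b, d, f}, {c, d, e}, {d, e, f}} : Set (Finset ℕ)) ∧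
    (∀ x y : Fin 3 → Bool, (∃! i, x i ≠ y i) ↔ (g x ∩ g y).card = 2) ∧
    (∀ x : Fin 3 → Bool, x ≠ (fun _ => false) →
      List.Lex (· < ·) (Finset.sort ({a, b, c} : Finset ℕ) (· ≤ ·))
        (Finset.sort (g x) (· ≤ ·))) := by
  have hbd : b ≠ d := fun h => hdI (h ▸ habcI (by simp))
  have hcd : c ≠ d := fun h => hdI (h ▸ habcI (by simp))
  have hce : c ≠ e := fun h => heI (h ▸ habcI (by simp))
  have hlabel : Injective (Cube.label ![a, b, c] ![d, e, f]) :=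
    Cube.label_injective (by simp [Injective, Fin.forall_fin_succ]; omega)
      (by simp [Injective, Fin.forall_fin_succ]; omega) (by simp [Fin.forall_fin_succ]; omega)
  have hgv : g = Cube.vertex ![a, b, c] ![d, e, f] := funext fun x => by
    rw [hg, Cube.vertex_fin_three]; rfl
  refine ⟨hgv ▸ Cube.vertex_injective hlabel, ?_, fun x y => ?_, fun x hx => ?_⟩
  · rw [show g = _ from funext hg, range_triple, insert_comm d b, insert_comm d b,
      show ({d, e, c} : Finset ℕ) = {c, d, e} by ext; simp only [mem_insert, mem_singleton]; tauto]
  · rw [hgv, Cube.card_vertex_inter_vertex hlabel, ← card_filter_add_one_eq_card_iff,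
      Fintype.card_fin, Nat.add_right_cancel_iff]
  · rw [hg]
    exact lex_sort_lt_sort_of_raise hab hbc had hbe hcf hx

/-- Let `3 ≤ r ≤ n−3`, let `I` be an `r`-subset of `[n]` with three smallest elements
`a < b < c`, and suppose `d < e < f` lie in `[n] \ I` with `a < d`, `b < e`, `c < f`.
Then the eight sets `{a,b,c},{a,b,f},{a,e,c},{a,e,f},{b,d,c},{b,d,f},{c,d,e},{d,e,f}`
form a cube subgraph of the graph on 3-subsets of `{a,b,c,d,e,f}` (adjacency =
intersection of size 2), and `{a,b,c}` is the lexicographically smallest vertex. -/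
theorem stmt_12 (n r : ℕ) (hr : 3 ≤ r) (hrn : r ≤ n - 3)
    (I : Finset ℕ) (hIn : I ⊆ Finset.Icc 1 n) (hIcard : I.card = r)
    (a b c d e f : ℕ)
    (hab : a < b) (hbc : b < c) (hde : d < e) (hef : e < f)
    (had : a < d) (hbe : b < e) (hcf : c < f)
    (habcI : ({a, b, c} : Finset ℕ) ⊆ I)
    (hmin : ∀ t ∈ I, t ∉ ({a, b, c} : Finset ℕ) → c < t)
    (hdn : d ∈ Finset.Icc 1 n) (hen : e ∈ Finset.Icc 1 n) (hfn : f ∈ Finset.Icc 1 n)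
    (hdI : d ∉ I) (heI : e ∉ I) (hfI : f ∉ I)
    (g : (Fin 3 → Bool) → Finset ℕ)
    (hg : ∀ x, g x = {if x 0 then d else a, if x 1 then e else b, if x 2 then f else c}) :
    Function.Injective g ∧
    Set.range g = ({{a, b, c}, {a, b, f}, {a, e, c}, {a, e, f},
                    {b, d, c}, {b, d, f}, {c, d, e}, {d, e, f}} : Set (Finset ℕ)) ∧
    (∀ x y : Fin 3 → Bool, (∃! i, x i ≠ y i) ↔ (g x ∩ g y).card = 2) ∧
    (∀ x : Fin 3 → Bool, x ≠ (fun _ => false) →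
      List.Lex (· < ·) (Finset.sort ({a, b, c} : Finset ℕ) (· ≤ ·))
        (Finset.sort (g x) (· ≤ ·))) :=
  stmt_12_general I a b c d e f hab hbc hde hef had hbe hcf habcI hdI heI g hg
end

section
/- For integers n > r ≥ 3, let p(n) denote the number of r-subsets I of [n] such that, writing {a < b < c} for the three smallest elements of I, there exist d < e < f in [n] \ I with a < d, b < e, c < f. Then p satisfies the recursion p(n) = Σ_{i=1}^{n−r} i·C(n−2−i, r−3) − (r−2) + p(n−1) with p(r+2) = 0, and consequently p(n) = C(n, r) − C(n, 2) for all n ≥ r+2. -/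
/-!
Let `J = [n] \ I` and `t = |J| = n - r`. Taking `d < e < f` to be the three largest elements of
`J` shows that `I` is counted by `p n` iff its `j`-th smallest element is at most `t - 2 + 2j`
for `j = 0, 1, 2`, i.e. iff `I` has at least `j + 1` elements `≤ t - 2 + 2j`. Among the
`r`-subsets of `[n]` with `n = r + u + k`, those having at least `j + 1` elements `≤ u + 2j` for
every `j ≤ k` satisfy Pascal's recursion (split on whether `1 ∈ I`), so exactly `C(n, k)` of them
fail. The recursion for `p` is the closed form combined with
`∑_{i ≤ M} i C(M - i, q) = C(M + 1, q + 2)`.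
-/

open Finset

section OrderStatistics

variable {α : Type*} [LinearOrder α]

theorem Finset.card_filter_le_eq_card_filter_orderEmbOfFin (S : Finset α) (v : α) :
    #{x ∈ S | x ≤ v} = #{i | S.orderEmbOfFin rfl i ≤ v} := by
  conv_lhs => rw [← S.map_orderEmbOfFin_univ rfl]
  rw [filter_map, card_map]
  rfl

theorem Finset.card_filter_le_orderEmbOfFin (S : Finset α) (i : Fin #S) :
    #{x ∈ S | x ≤ S.orderEmbOfFin rfl i} = i + 1 := by
  simp only [card_filter_le_eq_card_filter_orderEmbOfFin, OrderEmbedding.le_iff_le,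
    filter_ge_eq_Iic, Fin.card_Iic]

theorem Finset.orderEmbOfFin_le_iff (S : Finset α) (i : Fin #S) (v : α) :
    S.orderEmbOfFin rfl i ≤ v ↔ i.val + 1 ≤ #{x ∈ S | x ≤ v} := by
  rw [card_filter_le_eq_card_filter_orderEmbOfFin]
  set e := S.orderEmbOfFin rfl
  constructor
  · intro h
    calc i.val + 1 = #(Iic i) := (Fin.card_Iic i).symm
      _ ≤ _ := card_le_card fun j hj => by
        simp only [mem_Iic, mem_filter, mem_univ, true_and] at hj ⊢
        exact (e.monotone hj).trans h
  · intro h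
    by_contra! h'
    have : #{j | e j ≤ v} ≤ #(Iio i) := card_le_card fun j hj => by
      simp only [mem_Iio, mem_filter, mem_univ, true_and] at hj ⊢
      exact e.lt_iff_lt.1 (hj.trans_lt h')
    rw [Fin.card_Iio] at this
    omega

theorem Finset.getD_sort_eq_orderEmbOfFin (S : Finset α) {k : ℕ} (hk : k < #S) (d : α) :
    (S.sort (· ≤ ·)).getD k d = S.orderEmbOfFin rfl ⟨k, hk⟩ :=
  List.getD_eq_getElem _ _ _

theorem Finset.card_filter_le_add_card_le {J T : Finset α} {v : α} (hTJ : T ⊆ J)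
    (hT : ∀ x ∈ T, v < x) : #{x ∈ J | x ≤ v} + #T ≤ #J := by
  have hdisj : Disjoint {x ∈ J | x ≤ v} T :=
    disjoint_left.2 fun x hx hxT => (hT x hxT).not_ge (mem_filter.1 hx).2
  rw [← card_union_of_disjoint hdisj]
  exact card_le_card (union_subset (filter_subset _ _) hTJ)

theorem exists_dominating_triple_iff (J : Finset α) (a b c : α) :
    (∃ d e f, d ∈ J ∧ e ∈ J ∧ f ∈ J ∧ d < e ∧ e < f ∧ a < d ∧ b < e ∧ c < f) ↔
      #{x ∈ J | x ≤ a} + 3 ≤ #J ∧ #{x ∈ J | x ≤ b} + 2 ≤ #J ∧ #{x ∈ J | x ≤ c} + 1 ≤ #J := by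
  constructor
  · rintro ⟨d, e, f, hd, he, hf, hde, hef, had, hbe, hcf⟩
    refine ⟨?_, ?_, ?_⟩
    · have := card_filter_le_add_card_le (J := J) (T := {d, e, f}) (v := a) (by grind) (by grind)
      rwa [card_insert_of_notMem (by grind), card_pair hef.ne] at this
    · have := card_filter_le_add_card_le (J := J) (T := {e, f}) (v := b) (by grind) (by grind)
      rwa [card_pair hef.ne] at this
    · simpa using card_filter_le_add_card_le (J := J) (T := {f}) (v := c) (by grind) (by grind)
  · rintro ⟨ha, hb, hc⟩
    set g := J.orderEmbOfFin rfl
    have above (i : Fin #J) (v : α) (h : #{x ∈ J | x ≤ v} ≤ i) : v < g i :=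
      lt_of_not_ge fun hle => by have := (J.orderEmbOfFin_le_iff i v).1 hle; omega
    refine ⟨g ⟨#J - 3, by omega⟩, g ⟨#J - 2, by omega⟩, g ⟨#J - 1, by omega⟩,
      by simp [g], by simp [g], by simp [g], g.strictMono (by simp; omega),
      g.strictMono (by simp; omega), above _ _ ?_, above _ _ ?_, above _ _ ?_⟩ <;>
      dsimp only <;> omega

end OrderStatistics

def StairBounded (u k : ℕ) (I : Finset ℕ) : Prop :=
  ∀ j < k, j + 1 ≤ #{x ∈ I | x ≤ u + 2 * j}

instance (u k : ℕ) : DecidablePred (StairBounded u k) := fun _ => by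
  unfold StairBounded; infer_instance

theorem card_filter_le_map_succ (I : Finset ℕ) (v : ℕ) :
    #{x ∈ I.map (addRightEmbedding 1) | x ≤ v + 1} = #{x ∈ I | x ≤ v} := by
  simp [filter_map]

theorem card_filter_le_insert_one_map_succ {I : Finset ℕ} (hI : 0 ∉ I) (v : ℕ) :
    #{x ∈ insert 1 (I.map (addRightEmbedding 1)) | x ≤ v + 1} = #{x ∈ I | x ≤ v} + 1 := by
  rw [filter_insert, if_pos (by omega), card_insert_of_notMem (by simpa using hI),
    card_filter_le_map_succ]

theorem stairBounded_map_succ_iff {u k : ℕ} (I : Finset ℕ) :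
    StairBounded (u + 1) k (I.map (addRightEmbedding 1)) ↔ StairBounded u k I := by
  simp only [StairBounded, add_right_comm u 1, card_filter_le_map_succ]

theorem stairBounded_insert_one_map_succ_iff {u k : ℕ} {I : Finset ℕ} (hI : 0 ∉ I) :
    StairBounded (u + 1) (k + 1) (insert 1 (I.map (addRightEmbedding 1))) ↔
      StairBounded (u + 2) k I := by
  rw [StairBounded, Nat.forall_lt_succ_left]
  simp only [show ∀ j, u + 1 + 2 * j = u + 2 * j + 1 by omega,
    card_filter_le_insert_one_map_succ hI, le_add_iff_nonneg_left, zero_le, true_and]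
  simp only [StairBounded, show ∀ j, u + 2 * (j + 1) = u + 2 + 2 * j by omega,
    Nat.add_le_add_iff_right]

theorem card_stairBounded_succ (m r u k : ℕ) :
    #{I ∈ powersetCard (r + 1) (Icc 1 (m + 1)) | StairBounded (u + 1) (k + 1) I} =
      #{I ∈ powersetCard (r + 1) (Icc 1 m) | StairBounded u (k + 1) I} +
        #{I ∈ powersetCard r (Icc 1 m) | StairBounded (u + 2) k I} := by
  set sh := addRightEmbedding 1
  have hIcc : Icc 1 (m + 1) = insert 1 ((Icc 1 m).map sh) := by
    rw [map_add_right_Icc]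
    exact (insert_Icc_succ_left_eq_Icc (by omega)).symm
  have hnot : 1 ∉ (Icc 1 m).map sh := by simp [sh]
  have hzero {I : Finset ℕ} (hI : I ∈ powersetCard r (Icc 1 m)) : 0 ∉ I := fun h0 => by
    simpa using (mem_powersetCard.1 hI).1 h0
  have himage : (powersetCard r ((Icc 1 m).map sh)).image (insert 1) =
      (powersetCard r (Icc 1 m)).image fun I => insert 1 (I.map sh) := by
    rw [powersetCard_map, map_eq_image, image_image]; rfl
  rw [hIcc, powersetCard_succ_insert hnot, filter_union, card_union_of_disjoint, himage,
    powersetCard_map, filter_map, card_map, filter_image, card_image_of_injOn]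
  · congr 1 <;> refine congrArg card (filter_congr fun I hI => ?_)
    · exact stairBounded_map_succ_iff I
    · exact stairBounded_insert_one_map_succ_iff (hzero hI)
  · intro I hI J hJ hIJ
    have := congrArg (Finset.erase · 1) hIJ
    simp only [erase_insert (show 1 ∉ I.map sh by simpa [sh] using hzero (mem_filter.1 hI).1),
      erase_insert (show 1 ∉ J.map sh by simpa [sh] using hzero (mem_filter.1 hJ).1)] at this
    exact map_injective sh this
  · refine disjoint_left.2 fun I hI hI' => ?_
    obtain ⟨J, -, rfl⟩ := mem_image.1 (mem_filter.1 hI').1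
    exact hnot ((mem_powersetCard.1 (mem_filter.1 hI).1).1 (mem_insert_self 1 _))

theorem card_stairBounded_add_choose {m r u k : ℕ} (hm : m = r + u + k) (hk : k < r) :
    #{I ∈ powersetCard r (Icc 1 m) | StairBounded u (k + 1) I} + m.choose k = m.choose r := by
  induction m generalizing r u k with
  | zero => omega
  | succ m ih =>
    obtain ⟨r, rfl⟩ : ∃ r', r = r' + 1 := ⟨r - 1, by omega⟩
    cases u with
    | zero =>
      have hempty : {I ∈ powersetCard (r + 1) (Icc 1 (m + 1)) | StairBounded 0 (k + 1) I} = ∅ :=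
        filter_eq_empty_iff.2 fun I hI hI0 => by
          obtain ⟨x, hx⟩ := card_pos.1 (hI0 0 k.succ_pos)
          have hx1 := (mem_Icc.1 ((mem_powersetCard.1 hI).1 (mem_filter.1 hx).1)).1
          have hx0 := (mem_filter.1 hx).2
          omega
      rw [hempty, card_empty, zero_add,
        Nat.choose_symm_of_eq_add (show m + 1 = k + (r + 1) by omega)]
    | succ u =>
      rw [card_stairBounded_succ, Nat.choose_succ_succ']
      have hfirst := ih (r := r + 1) (u := u) (k := k) (by omega) hk
      cases k with
      | zero =>
        have hall : {I ∈ powersetCard r (Icc 1 m) | StairBounded (u + 2) 0 I} =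
            powersetCard r (Icc 1 m) := filter_true_of_mem fun I _ j hj => absurd hj j.not_lt_zero
        rw [hall, card_powersetCard, Nat.card_Icc, Nat.add_sub_cancel]
        simp only [Nat.choose_zero_right] at hfirst ⊢
        omega
      | succ k =>
        have hsecond := ih (r := r) (u := u + 2) (k := k) (by omega) (by omega)
        rw [Nat.choose_succ_succ' m k]
        omega

theorem card_filter_le_sdiff_add {m v : ℕ} {I : Finset ℕ} (hI : I ⊆ Icc 1 m) (hv : v ≤ m) :
    #{x ∈ Icc 1 m \ I | x ≤ v} + #{x ∈ I | x ≤ v} = v := by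
  rw [← card_union_of_disjoint (disjoint_filter_filter sdiff_disjoint), ← filter_union,
    sdiff_union_of_subset hI]
  have : {x ∈ Icc 1 m | x ≤ v} = Icc 1 v := by
    ext x
    simp only [mem_filter, mem_Icc]
    omega
  rw [this, Nat.card_Icc, Nat.add_sub_cancel]

theorem card_sdiff_filter_le_getD_sort_add_le_iff {m j : ℕ} {I : Finset ℕ} (hI : I ⊆ Icc 1 m)
    (hj : j < #I) (hm : #I + 2 ≤ m) :
    #{x ∈ Icc 1 m \ I | x ≤ (I.sort (· ≤ ·)).getD j 0} + 3 ≤ #(Icc 1 m \ I) + j ↔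
      j + 1 ≤ #{x ∈ I | x ≤ m - #I - 2 + 2 * j} := by
  rw [I.getD_sort_eq_orderEmbOfFin hj]
  set s := I.orderEmbOfFin rfl ⟨j, hj⟩
  have hsI : #{x ∈ I | x ≤ s} = j + 1 := I.card_filter_le_orderEmbOfFin _
  have hsm : s ≤ m := (mem_Icc.1 (hI (I.orderEmbOfFin_mem rfl _))).2
  have hsplit := card_filter_le_sdiff_add hI hsm
  have hJ : #(Icc 1 m \ I) = m - #I := by rw [card_sdiff_of_subset hI, Nat.card_Icc]; omega
  have hstair := I.orderEmbOfFin_le_iff ⟨j, hj⟩ (m - #I - 2 + 2 * j)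
  simp only at hstair
  omega

def HasDominatingTriple (m : ℕ) (I : Finset ℕ) : Prop :=
  ∃ d e f : ℕ,
    d ∈ Icc 1 m \ I ∧ e ∈ Icc 1 m \ I ∧ f ∈ Icc 1 m \ I ∧
    d < e ∧ e < f ∧
    (I.sort (· ≤ ·)).getD 0 0 < d ∧
    (I.sort (· ≤ ·)).getD 1 0 < e ∧
    (I.sort (· ≤ ·)).getD 2 0 < f

theorem hasDominatingTriple_iff_stairBounded {m : ℕ} {I : Finset ℕ} (hI : I ⊆ Icc 1 m)
    (hr : 3 ≤ #I) (hm : #I + 2 ≤ m) :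
    HasDominatingTriple m I ↔ StairBounded (m - #I - 2) 3 I := by
  have h0 := card_sdiff_filter_le_getD_sort_add_le_iff (j := 0) hI (by omega) hm
  have h1 := card_sdiff_filter_le_getD_sort_add_le_iff (j := 1) hI (by omega) hm
  have h2 := card_sdiff_filter_le_getD_sort_add_le_iff (j := 2) hI (by omega) hm
  rw [HasDominatingTriple, exists_dominating_triple_iff]
  constructor
  · rintro ⟨ha, hb, hc⟩ j hj
    interval_cases j
    exacts [h0.1 (by omega), h1.1 (by omega), h2.1 (by omega)]
  · intro h
    have := h0.2 (h 0 (by omega))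
    have := h1.2 (h 1 (by omega))
    have := h2.2 (h 2 (by omega))
    omega

theorem ncard_hasDominatingTriple_add_choose_two {m r : ℕ} (hr : 3 ≤ r) (hm : r + 2 ≤ m) :
    {I : Finset ℕ | I ⊆ Icc 1 m ∧ #I = r ∧ HasDominatingTriple m I}.ncard + m.choose 2 =
      m.choose r := by
  have hset : {I : Finset ℕ | I ⊆ Icc 1 m ∧ #I = r ∧ HasDominatingTriple m I} =
      ↑{I ∈ powersetCard r (Icc 1 m) | StairBounded (m - r - 2) 3 I} := by
    ext I
    simp only [Set.mem_ofPred_eq, coe_filter, mem_powersetCard, and_assoc]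
    refine and_congr_right fun hI => and_congr_right fun hIr => ?_
    subst hIr
    exact hasDominatingTriple_iff_stairBounded hI hr hm
  rw [hset, Set.ncard_coe_finset]
  exact card_stairBounded_add_choose (by omega) (by omega)

theorem sum_range_mul_choose_sub (q n : ℕ) :
    ∑ i ∈ range (n + 1), i * (q + n - i).choose q = (q + n + 1).choose (q + 2) := by
  induction n with
  | zero => simp
  | succ n ih =>
    have hockey : ∑ i ∈ range (n + 1), (q + n - i).choose q = (q + n + 1).choose (q + 1) := by
      rw [show q + n + 1 = n + q + 1 by ring, ← Nat.sum_range_add_choose, ← sum_range_reflect]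
      refine sum_congr rfl fun i hi => ?_
      have := mem_range.1 hi
      congr 1
      omega
    rw [sum_range_succ']
    simp only [show ∀ i, q + (n + 1) - (i + 1) = q + n - i by omega, add_mul, one_mul,
      sum_add_distrib, ih, hockey, zero_mul, add_zero]
    rw [show q + (n + 1) + 1 = q + n + 1 + 1 by ring, Nat.choose_succ_succ' (q + n + 1) (q + 1)]
    ring

theorem sum_Icc_mul_choose_add (q n : ℕ) :
    ∑ i ∈ Icc 1 n, i * (q + n + 1 - i).choose q + (n + 1) = (q + n + 2).choose (q + 2) := by
  have h := sum_range_mul_choose_sub q (n + 1)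
  rw [sum_range_succ, sum_range_succ'] at h
  simp only [zero_mul, add_zero, Nat.add_sub_cancel, Nat.choose_self, mul_one] at h
  rw [show q + n + 2 = q + (n + 1) + 1 by ring, ← h, ← Ico_add_one_right_eq_Icc,
    sum_Ico_eq_sum_range, Nat.add_sub_cancel]
  congr 1
  refine sum_congr rfl fun k _ => ?_
  rw [add_comm 1 k, show q + n + 1 - (k + 1) = q + (n + 1) - (k + 1) by omega]

theorem sum_Icc_mul_choose_eq_choose_sub {m r : ℕ} (hr : 3 ≤ r) (hm : r ≤ m) :
    ∑ i ∈ Icc 1 (m - r), (i : ℤ) * ((m - 2 - i).choose (r - 3) : ℤ) =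
      (m - 1).choose (r - 1) - ((m : ℤ) - r + 1) := by
  obtain ⟨q, rfl⟩ : ∃ q, r = q + 3 := ⟨r - 3, by omega⟩
  obtain ⟨n, rfl⟩ : ∃ n, m = q + n + 3 := ⟨m - (q + 3), by omega⟩
  have h := sum_Icc_mul_choose_add q n
  rw [show q + n + 3 - 1 = q + n + 2 by omega, show q + 3 - 1 = q + 2 by omega, ← h,
    show q + n + 3 - (q + 3) = n by omega]
  push_cast
  ring

/-- For `n > r ≥ 3`, let `p n` be the number of `r`-subsets `I` of `[n]` such that,
writing `a < b < c` for the three smallest elements of `I`, there exist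
`d < e < f` in `[n] \ I` with `a < d`, `b < e`, `c < f`.  Then `p(r+2) = 0`,
`p` satisfies the recursion
`p(n) = Σ_{i=1}^{n−r} i·C(n−2−i, r−3) − (r−2) + p(n−1)`,
and consequently `p(n) = C(n,r) − C(n,2)` for all `n ≥ r+2`. -/
theorem stmt_13 (r : ℕ) (hr : 3 ≤ r) (p : ℕ → ℕ)
    (hp : ∀ m : ℕ, p m = Set.ncard
      {I : Finset ℕ | I ⊆ Finset.Icc 1 m ∧ I.card = r ∧
        ∃ d e f : ℕ,
          d ∈ Finset.Icc 1 m \ I ∧ e ∈ Finset.Icc 1 m \ I ∧ f ∈ Finset.Icc 1 m \ I ∧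
          d < e ∧ e < f ∧
          (I.sort (· ≤ ·)).getD 0 0 < d ∧
          (I.sort (· ≤ ·)).getD 1 0 < e ∧
          (I.sort (· ≤ ·)).getD 2 0 < f}) :
    p (r + 2) = 0 ∧
    (∀ m : ℕ, r + 3 ≤ m →
      (p m : ℤ) = (∑ i ∈ Finset.Icc 1 (m - r), (i : ℤ) * (Nat.choose (m - 2 - i) (r - 3) : ℤ))
        - ((r : ℤ) - 2) + (p (m - 1) : ℤ)) ∧
    (∀ m : ℕ, r + 2 ≤ m →
      (p m : ℤ) = (Nat.choose m r : ℤ) - (Nat.choose m 2 : ℤ)) := by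
  have hclosed (m : ℕ) (hm : r + 2 ≤ m) : (p m : ℤ) = m.choose r - m.choose 2 := by
    have h : p m + m.choose 2 = m.choose r := by
      rw [hp m]
      exact ncard_hasDominatingTriple_add_choose_two hr hm
    omega
  refine ⟨?_, fun m hm => ?_, hclosed⟩
  · have h := hclosed (r + 2) le_rfl
    rw [Nat.choose_symm_add] at h
    omega
  · rw [hclosed m (by omega), hclosed (m - 1) (by omega),
      sum_Icc_mul_choose_eq_choose_sub hr (by omega)]
    obtain ⟨n, rfl⟩ : ∃ n, m = n + 1 := ⟨m - 1, by omega⟩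
    obtain ⟨s, rfl⟩ : ∃ s, r = s + 1 := ⟨r - 1, by omega⟩
    simp only [Nat.add_sub_cancel, Nat.choose_succ_succ' n, Nat.choose_one_right]
    push_cast
    ring
end

section
/- For 3 ≤ r ≤ n−3, the image of the linear map Trop(φ_r): ℝ^(C(n,2)) → ℝ^(C(n,r)) (whose I-coordinate is Σ_{{i,j}⊆I} x_{ij}) is contained in the kernel of every cube linear form Σ_{K∈B} x_{J⊔K} − Σ_{K∈W} x_{J⊔K}. -/
open scoped BigOperators

/-- Parity of a vertex of the 3-cube `Q₃` (giving its bipartition `B ⊔ W`). -/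
def cubeEven (x : Fin 3 → Bool) : Prop :=
  (Finset.univ.filter fun i => x i).card % 2 = 0

instance : DecidablePred cubeEven := fun x => by unfold cubeEven; infer_instance

/-!
A pair `A` contributes `x_A` to the coordinate `J ∪ K` exactly when `A \ J ⊆ K`, so it suffices
that for every set `s` of at most two elements the signed count
`Σ_{K ∈ B} [s ⊆ K] − Σ_{K ∈ W} [s ⊆ K]` vanishes. For `#s = 2` the vertices `K ⊇ s` form
either nothing or an edge of the cube: two 3-sets sharing `s` are adjacent, the cube has no
triangles, and each 2-subset of `K` is cut out by a neighbour of `K`; an edge joins `B` to `W`.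
Smaller `s` follow by double counting: summing the counts of `insert b s` over `b ∉ s` gives
`3 − #s` times the count of `s`.
-/

open Finset

def CubeAdj (v w : Fin 3 → Bool) : Prop := ∃! i, v i ≠ w i

instance (v w : Fin 3 → Bool) : Decidable (CubeAdj v w) := by
  unfold CubeAdj ExistsUnique; infer_instance

def cubeFlip (v : Fin 3 → Bool) (i : Fin 3) : Fin 3 → Bool := Function.update v i (!v i)

def cubeSign (v : Fin 3 → Bool) : ℤ := if cubeEven v then 1 else -1

theorem cubeAdj_cubeFlip : ∀ (v : Fin 3 → Bool) (i : Fin 3), CubeAdj v (cubeFlip v i) := by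
  decide

theorem eq_of_cubeFlip_eq_or_cubeAdj : ∀ (v : Fin 3 → Bool) (i j : Fin 3),
    cubeFlip v i = cubeFlip v j ∨ CubeAdj (cubeFlip v i) (cubeFlip v j) → i = j := by
  decide

theorem CubeAdj.ne : ∀ {v w : Fin 3 → Bool}, CubeAdj v w → v ≠ w := by
  decide

theorem CubeAdj.cubeSign_eq_neg :
    ∀ {v w : Fin 3 → Bool}, CubeAdj v w → cubeSign w = -cubeSign v := by
  unfold cubeSign; decide

theorem not_cubeAdj_triangle : ∀ {u v w : Fin 3 → Bool},
    CubeAdj u v → CubeAdj u w → ¬ CubeAdj v w := by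
  decide

theorem ite_cubeEven_neg {R : Type*} [Ring R] (v : Fin 3 → Bool) (t : R) :
    (if cubeEven v then t else -t) = cubeSign v * t := by
  unfold cubeSign; split_ifs <;> simp

section

variable {α : Type*} [DecidableEq α]

structure IsTripleCube (f : (Fin 3 → Bool) → Finset α) : Prop where
  card_eq : ∀ v, #(f v) = 3
  injective : Function.Injective f
  cubeAdj_iff : ∀ v w, CubeAdj v w ↔ #(f v ∩ f w) = 2

def signedCount (f : (Fin 3 → Bool) → Finset α) (s : Finset α) : ℤ :=
  ∑ v ∈ univ.filter (fun v => s ⊆ f v), cubeSign v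

namespace IsTripleCube

variable {f : (Fin 3 → Bool) → Finset α}

theorem eq_or_cubeAdj_of_subset (hf : IsTripleCube f) {s : Finset α} {v w : Fin 3 → Bool}
    (hs : 2 ≤ #s) (hv : s ⊆ f v) (hw : s ⊆ f w) : v = w ∨ CubeAdj v w := by
  rw [hf.cubeAdj_iff, or_iff_not_imp_right]
  intro hne
  have hle : #(f v ∩ f w) ≤ 3 := hf.card_eq v ▸ card_le_card inter_subset_left
  have hge : 2 ≤ #(f v ∩ f w) := hs.trans (card_le_card (subset_inter hv hw))
  have h3 : #(f v ∩ f w) = 3 := by omega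
  apply hf.injective
  calc f v = f v ∩ f w :=
        (eq_of_subset_of_card_le inter_subset_left (by rw [h3, hf.card_eq])).symm
    _ = f w := eq_of_subset_of_card_le inter_subset_right (by rw [h3, hf.card_eq])

/-- The three neighbours of `v` cut out three distinct 2-subsets of `f v`, hence all of them. -/
theorem exists_cubeAdj_inter_eq (hf : IsTripleCube f) {s : Finset α} {v : Fin 3 → Bool}
    (hs : s ⊆ f v) (hs2 : #s = 2) : ∃ w, CubeAdj v w ∧ f v ∩ f w = s := by
  have hmaps : Set.MapsTo (fun i => f v ∩ f (cubeFlip v i)) (univ : Finset (Fin 3))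
      ((f v).powersetCard 2) := fun i _ =>
    mem_powersetCard.2 ⟨inter_subset_left, (hf.cubeAdj_iff _ _).1 (cubeAdj_cubeFlip v i)⟩
  have hinj : Set.InjOn (fun i => f v ∩ f (cubeFlip v i)) (univ : Finset (Fin 3)) := by
    intro i _ j _ hij
    have h2 : #(f v ∩ f (cubeFlip v i)) = 2 := (hf.cubeAdj_iff _ _).1 (cubeAdj_cubeFlip v i)
    refine eq_of_cubeFlip_eq_or_cubeAdj v i j (hf.eq_or_cubeAdj_of_subset h2.ge
      inter_subset_right ?_)
    exact (le_of_eq hij).trans inter_subset_right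
  obtain ⟨i, -, hi⟩ := surjOn_of_injOn_of_card_le _ hmaps hinj
    (by simp [card_powersetCard, hf.card_eq]) (mem_powersetCard.2 ⟨hs, hs2⟩)
  exact ⟨cubeFlip v i, cubeAdj_cubeFlip v i, hi⟩

theorem filter_subset_eq_pair (hf : IsTripleCube f) {s : Finset α} {v : Fin 3 → Bool}
    (hs : s ⊆ f v) (hs2 : #s = 2) :
    ∃ w, CubeAdj v w ∧ univ.filter (fun u => s ⊆ f u) = {v, w} := by
  obtain ⟨w, hvw, hw⟩ := hf.exists_cubeAdj_inter_eq hs hs2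
  have hsw : s ⊆ f w := hw ▸ inter_subset_right
  refine ⟨w, hvw, Subset.antisymm (fun u hu => ?_) ?_⟩
  · have hsu : s ⊆ f u := (mem_filter.1 hu).2
    rcases hf.eq_or_cubeAdj_of_subset hs2.ge hsu hs with rfl | huv
    · exact mem_insert_self _ _
    rcases hf.eq_or_cubeAdj_of_subset hs2.ge hsu hsw with rfl | huw
    · exact mem_insert_of_mem (mem_singleton_self _)
    exact absurd hvw (not_cubeAdj_triangle huv huw)
  · simp [insert_subset_iff, hs, hsw]

theorem signedCount_eq_zero_of_card_eq_two (hf : IsTripleCube f) {s : Finset α}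
    (hs2 : #s = 2) : signedCount f s = 0 := by
  rcases (univ.filter (fun u => s ⊆ f u)).eq_empty_or_nonempty with hempty | ⟨v, hv⟩
  · rw [signedCount, hempty, sum_empty]
  obtain ⟨w, hvw, hpair⟩ := hf.filter_subset_eq_pair (mem_filter.1 hv).2 hs2
  rw [signedCount, hpair, sum_pair hvw.ne, hvw.cubeSign_eq_neg, add_neg_cancel]

theorem signedCount_eq_zero_of_forall_insert (hf : IsTripleCube f) {s : Finset α}
    (hs : #s < 3) (hins : ∀ b ∉ s, signedCount f (insert b s) = 0) :
    signedCount f s = 0 := by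
  -- each `v` with `s ⊆ f v` is counted once for every `b ∈ f v \ s`
  have hswap : ∑ b ∈ univ.biUnion f \ s, signedCount f (insert b s) =
      ∑ v ∈ univ.filter (fun v => s ⊆ f v), ∑ _b ∈ f v \ s, cubeSign v := by
    refine sum_comm' fun b v => ?_
    simp only [mem_sdiff, mem_biUnion, mem_univ, true_and, mem_filter, insert_subset_iff]
    grind
  have hcount : ∀ v ∈ univ.filter (fun v => s ⊆ f v), ∑ _b ∈ f v \ s, cubeSign v =
      (3 - #s : ℕ) • cubeSign v := fun v hv => by
    rw [sum_const, card_sdiff_of_subset (mem_filter.1 hv).2, hf.card_eq]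
  rw [sum_congr rfl hcount, ← smul_sum, sum_eq_zero fun b hb => hins b (mem_sdiff.1 hb).2]
    at hswap
  rw [signedCount]
  exact (smul_eq_zero.1 hswap.symm).resolve_left (by omega)

theorem signedCount_eq_zero (hf : IsTripleCube f) {s : Finset α} (hs : #s ≤ 2) :
    signedCount f s = 0 := by
  induction h : 2 - #s generalizing s with
  | zero => exact hf.signedCount_eq_zero_of_card_eq_two (by omega)
  | succ k ih =>
    refine hf.signedCount_eq_zero_of_forall_insert (by omega) fun b hb =>
      ih (by rw [card_insert_of_notMem hb]; omega) (by rw [card_insert_of_notMem hb]; omega)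

end IsTripleCube

end

theorem stmt_15_general (n r : ℕ)
    (T : ({J : Finset (Fin n) // J.card = 2} → ℝ) →
         ({I : Finset (Fin n) // I.card = r} → ℝ))
    (hT : ∀ x I, T x I = ∑ J : {J : Finset (Fin n) // J.card = 2},
      if J.1 ⊆ I.1 then x J else 0) :
    ∀ (x : {J : Finset (Fin n) // J.card = 2} → ℝ)
      (I J : Finset (Fin n)) (f : (Fin 3 → Bool) → Finset (Fin n)),
        I.card = 6 → J.card = r - 3 → Disjoint J I →
        (∀ v, f v ⊆ I ∧ (f v).card = 3) →
        Function.Injective f →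
        (∀ v w : Fin 3 → Bool, (∃! i, v i ≠ w i) ↔ (f v ∩ f w).card = 2) →
        ∀ h : ∀ v, (J ∪ f v).card = r,
          ∑ v : Fin 3 → Bool,
            (if cubeEven v then T x ⟨J ∪ f v, h v⟩ else -(T x ⟨J ∪ f v, h v⟩)) = 0 := by
  intro x I J f _ _ _ hfI hfinj hadj h
  have hf : IsTripleCube f := ⟨fun v => (hfI v).2, hfinj, hadj⟩
  simp only [ite_cubeEven_neg, hT, mul_sum]
  rw [sum_comm]
  refine sum_eq_zero fun A _ => ?_
  calc ∑ v, (cubeSign v : ℝ) * (if A.1 ⊆ J ∪ f v then x A else 0)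
      = signedCount f (A.1 \ J) * x A := by
        have hcond : ∀ v, A.1 \ J ⊆ f v ↔ A.1 ⊆ J ∪ f v := fun v => sdiff_le_iff
        simp only [signedCount, hcond, sum_filter, Int.cast_sum, Int.cast_ite, Int.cast_zero,
          sum_mul, mul_ite, ite_mul, mul_zero, zero_mul]
    _ = 0 := by
        rw [hf.signedCount_eq_zero ((card_le_card sdiff_subset).trans A.2.le), Int.cast_zero,
          zero_mul]

/-- For `3 ≤ r ≤ n−3`, the image of the linear map
`Trop(φ_r) : ℝ^(C(n,2)) → ℝ^(C(n,r))` (whose `I`-coordinate is `Σ_{{i,j}⊆I} x_{ij}`)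
is contained in the kernel of every cube linear form
`Σ_{K∈B} x_{J⊔K} − Σ_{K∈W} x_{J⊔K}`.  A cube on a 6-subset `I` of `[n]` is encoded by
an injective `f : Q₃ → {3-subsets of I}` matching adjacency; `B`, `W` are its even-
and odd-parity classes, and `J` ranges over `(r−3)`-subsets of `[n]\I`. -/
theorem stmt_15 (n r : ℕ) (hr : 3 ≤ r) (hrn : r ≤ n - 3)
    (T : ({J : Finset (Fin n) // J.card = 2} → ℝ) →
         ({I : Finset (Fin n) // I.card = r} → ℝ))
    (hT : ∀ x I, T x I = ∑ J : {J : Finset (Fin n) // J.card = 2},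
      if J.1 ⊆ I.1 then x J else 0) :
    ∀ (x : {J : Finset (Fin n) // J.card = 2} → ℝ)
      (I J : Finset (Fin n)) (f : (Fin 3 → Bool) → Finset (Fin n)),
        I.card = 6 → J.card = r - 3 → Disjoint J I →
        (∀ v, f v ⊆ I ∧ (f v).card = 3) →
        Function.Injective f →
        (∀ v w : Fin 3 → Bool, (∃! i, v i ≠ w i) ↔ (f v ∩ f w).card = 2) →
        ∀ h : ∀ v, (J ∪ f v).card = r,
          ∑ v : Fin 3 → Bool,
            (if cubeEven v then T x ⟨J ∪ f v, h v⟩ else -(T x ⟨J ∪ f v, h v⟩)) = 0 :=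
  stmt_15_general n r T hT
end

section
/- Any two rational normal curves in ℙ^{r−1} that share r+2 points in general linear position are equal (Castelnuovo uniqueness consequence): if X and X' are rational normal curves of degree r−1 in ℙ^{r−1} containing a common set of r+2 points, any r of which are linearly independent, then X = X'. -/
open scoped LinearAlgebra.Projectivization

/-- The standard rational normal curve in `ℙ^{r-1}`: the image of `ℙ¹` under
`[s : t] ↦ [s^{r-1} : s^{r-2}t : ⋯ : t^{r-1}]`. -/
def stdRNC (k : Type*) [Field k] (r : ℕ) : Set (ℙ k (Fin r → k)) :=
  {P | ∃ (s t : k) (h : (fun a : Fin r => s ^ (r - 1 - (a : ℕ)) * t ^ (a : ℕ)) ≠ 0),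
    P = Projectivization.mk k _ h}

/-- A rational normal curve in `ℙ^{r-1}`: a subset projectively equivalent to the
standard rational normal curve. -/
def IsRNC (k : Type*) [Field k] (r : ℕ) (C : Set (ℙ k (Fin r → k))) : Prop :=
  ∃ g : (Fin r → k) ≃ₗ[k] (Fin r → k),
    C = (Projectivization.map (g : (Fin r → k) →ₗ[k] (Fin r → k)) g.injective) '' stdRNC k r

/-!
Write `X = g(C)` and `X' = g'(C)`, where `C` is the standard curve, parametrised by
`ν(s, t) = (s^(r-1-a) t^a)ₐ`. The common points are `g ν(zᵢ) ∼ g' ν(wᵢ)`, where the parameters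
`zᵢ` (and likewise `wᵢ`) are pairwise non-proportional because the points are distinct. Then
`h = g'⁻¹ g` sends each `ν(zᵢ)` to a multiple of `ν(wᵢ)`.

A matrix `A ∈ GL₂` acts on `kʳ` through its symmetric power `Sym^(r-1) A`, with
`Sym^(r-1) A (ν x) = ν (A x)`. Conjugating `h` by this action, we may assume
`z_r, w_r ∼ (1, 0)` and `z_(r+1), w_(r+1) ∼ (0, 1)`. Then `h` fixes the lines through
`e₀ = ν(1, 0)` and `e_(r-1) = ν(0, 1)`, and sends `ν(1, lᵢ)` to a multiple of `ν(1, l'ᵢ)` for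
`i < r`. By Lagrange interpolation, `e₀` and `e_(r-1)` expand in the Vandermonde bases
`ν(1, lᵢ)` and `ν(1, l'ᵢ)`. Comparing the coefficients of these expansions forces `l' = α l`, so
`h` is a multiple of `Sym^(r-1) (diag(1, α))`. Hence `h` is induced by an element of `GL₂` and
maps `C` onto `C`, which gives `X ⊆ X'`. The reverse inclusion follows by symmetry.
-/

open Polynomial Finset Matrix

section Veronese

variable {k : Type*} [Field k]

def wedge (x y : Fin 2 → k) : k := x 0 * y 1 - x 1 * y 0

lemma wedge_mulVec (A : Matrix (Fin 2) (Fin 2) k) (x y : Fin 2 → k) :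
    wedge (A *ᵥ x) (A *ᵥ y) = A.det * wedge x y := by
  simp only [wedge, mulVec, dotProduct, Fin.sum_univ_two, det_fin_two]
  ring

lemma exists_eq_smul_of_wedge_eq_zero {x y : Fin 2 → k} (hy : y ≠ 0) (h : wedge x y = 0) :
    ∃ d : k, x = d • y := by
  obtain ⟨j, hj⟩ := Function.ne_iff.mp hy
  refine ⟨x j / y j, funext fun i => ?_⟩
  rw [Pi.smul_apply, smul_eq_mul, div_mul_eq_mul_div, eq_div_iff hj]
  simp only [wedge] at h
  fin_cases i <;> fin_cases j <;> simp only [Fin.zero_eta, Fin.mk_one] <;>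
    first | rfl | linear_combination h | linear_combination -h

def veronese (r : ℕ) (x : Fin 2 → k) : Fin r → k := fun a => x 0 ^ (r - 1 - a) * x 1 ^ (a : ℕ)

lemma veronese_smul (r : ℕ) (c : k) (x : Fin 2 → k) :
    veronese r (c • x) = c ^ (r - 1) • veronese r x := by
  funext a
  have ha : r - 1 = (r - 1 - a) + a := by omega
  simp only [veronese, Pi.smul_apply, smul_eq_mul, mul_pow]
  rw [ha, pow_add, Nat.add_sub_cancel]
  ring

lemma veronese_zero {r : ℕ} (hr : 2 ≤ r) : veronese r (0 : Fin 2 → k) = 0 := by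
  funext a
  rcases Nat.eq_zero_or_pos a with ha | ha
  · simp [veronese, ha, zero_pow (by omega : r - 1 ≠ 0)]
  · simp [veronese, zero_pow ha.ne']

end Veronese

section SymPow

variable {k : Type*} [Field k]

lemma MvPolynomial.IsHomogeneous.eval_eq_sum_range {q : MvPolynomial (Fin 2) k} {n : ℕ}
    (hq : q.IsHomogeneous n) (x : Fin 2 → k) :
    MvPolynomial.eval x q = ∑ m ∈ range (n + 1),
      (MvPolynomial.aeval ![Polynomial.X, 1] q).coeff (n - m) * (x 0 ^ (n - m) * x 1 ^ m) := by
  conv_lhs => rw [← homogenize_eq_of_isHomogeneous hq rfl]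
  rw [homogenize, MvPolynomial.eval_sum, ← Finset.Nat.sum_antidiagonal_swap,
    Finset.Nat.sum_antidiagonal_eq_sum_range_succ_mk]
  refine Finset.sum_congr rfl fun m _ => ?_
  simp [MvPolynomial.eval_monomial, Finsupp.prod_fintype]

noncomputable def linearForm (A : Matrix (Fin 2) (Fin 2) k) (j : Fin 2) :
    MvPolynomial (Fin 2) k :=
  ∑ l, MvPolynomial.C (A j l) * MvPolynomial.X l

lemma isHomogeneous_linearForm (A : Matrix (Fin 2) (Fin 2) k) (j : Fin 2) :
    (linearForm A j).IsHomogeneous 1 :=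
  MvPolynomial.IsHomogeneous.sum _ _ _ fun _ _ => MvPolynomial.isHomogeneous_C_mul_X _ _

lemma eval_linearForm (A : Matrix (Fin 2) (Fin 2) k) (j : Fin 2) (x : Fin 2 → k) :
    MvPolynomial.eval x (linearForm A j) = (A *ᵥ x) j := by
  simp [linearForm, mulVec, dotProduct]

noncomputable def symPowForm (r : ℕ) (A : Matrix (Fin 2) (Fin 2) k) (i : Fin r) :
    MvPolynomial (Fin 2) k :=
  linearForm A 0 ^ (r - 1 - i) * linearForm A 1 ^ (i : ℕ)

lemma isHomogeneous_symPowForm (r : ℕ) (A : Matrix (Fin 2) (Fin 2) k) (i : Fin r) :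
    (symPowForm r A i).IsHomogeneous (r - 1) := by
  have h := ((isHomogeneous_linearForm A 0).pow (r - 1 - i)).mul
    ((isHomogeneous_linearForm A 1).pow i)
  rwa [one_mul, one_mul, Nat.sub_add_cancel (by omega : (i : ℕ) ≤ r - 1)] at h

/-- Row `i` lists the coefficients of the binary form `(A x)₀ ^ (r-1-i) * (A x)₁ ^ i` in the
monomials `x₀ ^ (r-1-m) * x₁ ^ m`, read off from its dehomogenisation `x₁ = 1`. -/
noncomputable def symPow (r : ℕ) (A : Matrix (Fin 2) (Fin 2) k) :
    (Fin r → k) →ₗ[k] (Fin r → k) :=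
  Matrix.toLin' <| Matrix.of fun i m =>
    (MvPolynomial.aeval ![Polynomial.X, 1] (symPowForm r A i)).coeff (r - 1 - m)

lemma symPow_veronese (r : ℕ) (A : Matrix (Fin 2) (Fin 2) k) (x : Fin 2 → k) :
    symPow r A (veronese r x) = veronese r (A *ᵥ x) := by
  funext i
  have hr : r - 1 + 1 = r := by have := i.pos; omega
  have h := (isHomogeneous_symPowForm r A i).eval_eq_sum_range x
  rw [hr, ← Fin.sum_univ_eq_sum_range] at h
  simpa [symPow, mulVec, dotProduct, veronese, symPowForm, eval_linearForm] using h.symm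

end SymPow

section Vandermonde

variable {k : Type*} [Field k] {r : ℕ}

lemma linearIndependent_veronese {l : Fin r → k} (hl : Function.Injective l) :
    LinearIndependent k fun i => veronese r ![1, l i] := by
  have hv : (fun i => veronese r ![1, l i]) = (vandermonde l).row := by
    funext i m
    simp [veronese, vandermonde]
  rw [hv, linearIndependent_rows_iff_isUnit, isUnit_iff_isUnit_det, det_vandermonde,
    isUnit_iff_ne_zero, prod_ne_zero_iff]
  exact fun i _ => prod_ne_zero_iff.mpr fun j hj =>
    sub_ne_zero.mpr fun h => (mem_Ioi.mp hj).ne' (hl h)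

lemma LinearMap.ext_on_veronese {l : Fin r → k} (hl : Function.Injective l)
    {F G : (Fin r → k) →ₗ[k] (Fin r → k)}
    (h : ∀ i, F (veronese r ![1, l i]) = G (veronese r ![1, l i])) : F = G :=
  LinearMap.ext_on_range ((linearIndependent_veronese hl).span_eq_top_of_card_eq_finrank'
    (by simp)) h

lemma LinearMap.ext_veronese [Infinite k] {F G : (Fin r → k) →ₗ[k] (Fin r → k)}
    (h : ∀ x, F (veronese r x) = G (veronese r x)) : F = G :=
  LinearMap.ext_on_veronese (l := fun i => Infinite.natEmbedding k i)
    ((Infinite.natEmbedding k).injective.comp Fin.val_injective) fun _ => h _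

lemma symPow_mul [Infinite k] (A B : Matrix (Fin 2) (Fin 2) k) :
    symPow r (A * B) = symPow r A ∘ₗ symPow r B :=
  LinearMap.ext_veronese fun x => by
    rw [LinearMap.comp_apply, symPow_veronese, symPow_veronese, symPow_veronese, mulVec_mulVec]

lemma symPow_one [Infinite k] : symPow r (1 : Matrix (Fin 2) (Fin 2) k) = LinearMap.id :=
  LinearMap.ext_veronese fun x => by simp [symPow_veronese]

lemma symPow_apply_symPow_inv [Infinite k] {A : Matrix (Fin 2) (Fin 2) k} (hA : A.det ≠ 0)
    (x : Fin r → k) : symPow r A (symPow r A⁻¹ x) = x := by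
  rw [← LinearMap.comp_apply, ← symPow_mul, mul_nonsing_inv _ (isUnit_iff_ne_zero.mpr hA),
    symPow_one, LinearMap.id_apply]

end Vandermonde

section Lagrange

variable {k : Type*} [Field k] {ι : Type*} [DecidableEq ι]

lemma Lagrange.eval_zero_basis (s : Finset ι) (v : ι → k) (i : ι) :
    eval 0 (Lagrange.basis s v i) = (∏ j ∈ s.erase i, -v j) * Lagrange.nodalWeight s v i := by
  simp only [Lagrange.basis, Lagrange.basisDivisor, Lagrange.nodalWeight, eval_prod, eval_mul,
    eval_C, eval_sub, eval_X, zero_sub, ← prod_mul_distrib]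
  exact prod_congr rfl fun _ _ => mul_comm _ _

lemma Lagrange.eval_zero_basis_smul (s : Finset ι) (v : ι → k) (i : ι) {α : k} (hα : α ≠ 0) :
    eval 0 (Lagrange.basis s (α • v) i) = eval 0 (Lagrange.basis s v i) := by
  simp only [Lagrange.basis, Lagrange.basisDivisor, eval_prod, eval_mul, eval_C, eval_sub,
    eval_X, Pi.smul_apply, smul_eq_mul, ← mul_sub, mul_inv, zero_sub, ← mul_neg]
  refine prod_congr rfl fun _ _ => ?_
  field_simp

variable {r : ℕ}

lemma veronese_zero_one_eq_sum {l : Fin r → k} (hl : Function.Injective l) :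
    veronese r ![0, 1] = ∑ i, Lagrange.nodalWeight univ l i • veronese r ![1, l i] := by
  funext m
  have h := Lagrange.coeff_eq_sum hl.injOn (P := X ^ (m : ℕ))
    (by rw [degree_X_pow, card_univ, Fintype.card_fin]; exact_mod_cast m.isLt)
  simp only [coeff_X_pow, card_univ, Fintype.card_fin, eval_pow, eval_X] at h
  simp only [veronese, Finset.sum_apply, Pi.smul_apply, smul_eq_mul, Lagrange.nodalWeight,
    cons_val_zero, cons_val_one, one_pow, one_mul, mul_one, zero_pow_eq, prod_inv_distrib]
  simp only [show r - 1 - m = 0 ↔ r - 1 = m by omega, h]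
  exact sum_congr rfl fun _ _ => by ring

lemma veronese_one_zero_eq_sum {l : Fin r → k} (hl : Function.Injective l) :
    veronese r ![1, 0] = ∑ i, eval 0 (Lagrange.basis univ l i) • veronese r ![1, l i] := by
  funext m
  have h := congrArg (eval 0) (Lagrange.eq_interpolate hl.injOn (f := X ^ (m : ℕ))
    (by rw [degree_X_pow, card_univ, Fintype.card_fin]; exact_mod_cast m.isLt))
  simp only [Lagrange.interpolate_apply, eval_pow, eval_X, eval_finsetSum, eval_mul, eval_C] at h
  simp only [veronese, Finset.sum_apply, Pi.smul_apply, smul_eq_mul, cons_val_zero, cons_val_one,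
    one_pow, one_mul, h]
  exact sum_congr rfl fun _ _ => mul_comm _ _

end Lagrange

section Rigidity

variable {k : Type*} [Field k] {r : ℕ}

lemma LinearIndependent.mul_eq_of_map_sum_smul {ι V W : Type*} [Fintype ι] [AddCommGroup V]
    [Module k V] [AddCommGroup W] [Module k W] {H : V →ₗ[k] W} {v : ι → V} {w : ι → W}
    (hw : LinearIndependent k w) {f : ι → k} (hf : ∀ i, H (v i) = f i • w i) {a b : ι → k}
    (hab : H (∑ i, a i • v i) = ∑ i, b i • w i) (i : ι) : a i * f i = b i := by
  refine Fintype.linearIndependent_iffₛ.mp hw (fun i => a i * f i) b ?_ i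
  rw [← hab, map_sum]
  exact sum_congr rfl fun j _ => by rw [map_smul, hf, smul_smul]

theorem exists_eq_smul_symPow_diagonal {H : (Fin r → k) →ₗ[k] (Fin r → k)} {l l' : Fin r → k}
    (hl : Function.Injective l) (hl' : Function.Injective l') (hl0 : ∀ i, l i ≠ 0)
    (hl0' : ∀ i, l' i ≠ 0) {a b : k} (ha : a ≠ 0) (hb : b ≠ 0)
    (h10 : H (veronese r ![1, 0]) = a • veronese r ![1, 0])
    (h01 : H (veronese r ![0, 1]) = b • veronese r ![0, 1])
    (hll' : ∀ i, ∃ f : k, H (veronese r ![1, l i]) = f • veronese r ![1, l' i]) :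
    ∃ α : k, α ≠ 0 ∧ H = a • symPow r (diagonal ![1, α]) := by
  choose f hf using hll'
  have hA (i : Fin r) := (linearIndependent_veronese hl').mul_eq_of_map_sum_smul hf
    (a := fun i => eval 0 (Lagrange.basis univ l i))
    (b := fun i => a * eval 0 (Lagrange.basis univ l' i)) (by
      simp_rw [← veronese_one_zero_eq_sum hl, h10, veronese_one_zero_eq_sum hl', smul_sum,
        smul_smul]) i
  have hB (i : Fin r) := (linearIndependent_veronese hl').mul_eq_of_map_sum_smul hf
    (a := fun i => Lagrange.nodalWeight univ l i)
    (b := fun i => b * Lagrange.nodalWeight univ l' i) (by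
      simp_rw [← veronese_zero_one_eq_sum hl, h01, veronese_zero_one_eq_sum hl', smul_sum,
        smul_smul]) i
  simp only [Lagrange.eval_zero_basis] at hA
  -- Dividing the `e₀`-equation by the `e_(r-1)`-equation leaves only the factors `∏_(j ≠ i) -l j`.
  have hprod (i : Fin r) : b * ∏ j ∈ univ.erase i, -l j = a * ∏ j ∈ univ.erase i, -l' j := by
    refine mul_right_cancel₀ (Lagrange.nodalWeight_ne_zero hl'.injOn (mem_univ i)) ?_
    linear_combination hA i - (∏ j ∈ univ.erase i, -l j) * hB i
  have hP : (∏ j, -l j) ≠ 0 := prod_ne_zero_iff.mpr fun j _ => neg_ne_zero.mpr (hl0 j)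
  have hP' : (∏ j, -l' j) ≠ 0 := prod_ne_zero_iff.mpr fun j _ => neg_ne_zero.mpr (hl0' j)
  set α := a * (∏ j, -l' j) / (b * ∏ j, -l j)
  have hα : α ≠ 0 := div_ne_zero (mul_ne_zero ha hP') (mul_ne_zero hb hP)
  have hl'l : l' = α • l := by
    funext i
    rw [Pi.smul_apply, smul_eq_mul, div_mul_eq_mul_div, eq_div_iff (mul_ne_zero hb hP),
      ← mul_prod_erase univ (fun j => -l j) (mem_univ i),
      ← mul_prod_erase univ (fun j => -l' j) (mem_univ i)]
    linear_combination (-l' i * l i) * hprod i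
  have hf_eq (i : Fin r) : f i = a := by
    have hAi := hA i
    rw [hl'l, ← Lagrange.eval_zero_basis, ← Lagrange.eval_zero_basis,
      Lagrange.eval_zero_basis_smul _ _ _ hα, mul_comm a] at hAi
    refine mul_left_cancel₀ ?_ hAi
    rw [Lagrange.eval_zero_basis]
    exact mul_ne_zero (prod_ne_zero_iff.mpr fun j _ => neg_ne_zero.mpr (hl0 j))
      (Lagrange.nodalWeight_ne_zero hl.injOn (mem_univ i))
  refine ⟨α, hα, LinearMap.ext_on_veronese hl fun i => ?_⟩
  rw [hf, hf_eq, hl'l, LinearMap.smul_apply, symPow_veronese]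
  congr 2
  ext j
  fin_cases j <;> simp [mulVec_diagonal]

lemma exists_normalForm {z : Fin (r + 2) → Fin 2 → k}
    (hz : Pairwise fun i j => wedge (z i) (z j) ≠ 0) :
    ∃ (P : Matrix (Fin 2) (Fin 2) k) (l : Fin r → k), P.det ≠ 0 ∧ Function.Injective l ∧
      (∀ i, l i ≠ 0) ∧ z (Fin.natAdd r 0) = P *ᵥ ![1, 0] ∧ z (Fin.natAdd r 1) = P *ᵥ ![0, 1] ∧
      ∀ i, ∃ d : k, d ≠ 0 ∧ z (Fin.castAdd 2 i) = d • P *ᵥ ![1, l i] := by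
  set u := z (Fin.natAdd r 0)
  set v := z (Fin.natAdd r 1)
  set P : Matrix (Fin 2) (Fin 2) k := !![u 0, v 0; u 1, v 1]
  have hPu : u = P *ᵥ ![1, 0] := by ext j; fin_cases j <;> simp [P]
  have hPv : v = P *ᵥ ![0, 1] := by ext j; fin_cases j <;> simp [P]
  have hP : P.det ≠ 0 := by
    have h : wedge u v ≠ 0 := hz (by simp [Fin.ext_iff])
    rwa [det_fin_two_of, mul_comm (v 0)]
  set y : Fin r → Fin 2 → k := fun i => P⁻¹ *ᵥ z (Fin.castAdd 2 i)
  have hPy (i : Fin r) : P *ᵥ y i = z (Fin.castAdd 2 i) := by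
    rw [mulVec_mulVec, mul_nonsing_inv _ (isUnit_iff_ne_zero.mpr hP), one_mulVec]
  have hne (i : Fin r) (j : Fin 2) : Fin.castAdd 2 i ≠ Fin.natAdd r j := by
    simp [Fin.ext_iff]; omega
  have hy0 (i : Fin r) : y i 0 ≠ 0 := by
    have h : wedge (z _) v ≠ 0 := hz (hne i 1)
    rw [← hPy, hPv, wedge_mulVec] at h
    simpa [wedge] using right_ne_zero_of_mul h
  have hy1 (i : Fin r) : y i 1 ≠ 0 := by
    have h : wedge (z _) u ≠ 0 := hz (hne i 0)
    rw [← hPy, hPu, wedge_mulVec] at h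
    simpa [wedge] using right_ne_zero_of_mul h
  refine ⟨P, fun i => y i 1 / y i 0, hP, fun i j hij => ?_, fun i => div_ne_zero (hy1 i) (hy0 i),
    hPu, hPv, fun i => ⟨y i 0, hy0 i, ?_⟩⟩
  · by_contra hij'
    have h : wedge (z _) (z _) ≠ 0 := hz ((Fin.castAdd_injective _ _).ne hij')
    rw [← hPy, ← hPy, wedge_mulVec] at h
    apply right_ne_zero_of_mul h
    simp only [wedge]
    rw [div_eq_div_iff (hy0 i) (hy0 j)] at hij
    linear_combination -hij
  · rw [← hPy, ← mulVec_smul]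
    congr 1
    ext j
    fin_cases j <;> simp [mul_div_cancel₀ _ (hy0 i)]

theorem exists_eq_smul_symPow [Infinite k] {h : (Fin r → k) →ₗ[k] (Fin r → k)}
    {z w : Fin (r + 2) → Fin 2 → k} (hz : Pairwise fun i j => wedge (z i) (z j) ≠ 0)
    (hw : Pairwise fun i j => wedge (w i) (w j) ≠ 0)
    (hzw : ∀ i, ∃ c : k, c ≠ 0 ∧ h (veronese r (z i)) = c • veronese r (w i)) :
    ∃ A : Matrix (Fin 2) (Fin 2) k, A.det ≠ 0 ∧ ∃ c : k, c ≠ 0 ∧ h = c • symPow r A := by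
  choose c hc0 hc using hzw
  obtain ⟨P, l, hP, hl, hl0, hPu, hPv, hPz⟩ := exists_normalForm hz
  obtain ⟨Q, l', hQ, hl', hl0', hQu, hQv, hQw⟩ := exists_normalForm hw
  set H := symPow r Q⁻¹ ∘ₗ h ∘ₗ symPow r P
  have hH (i : Fin (r + 2)) {x y : Fin 2 → k} {d d' : k} (hd : d ≠ 0)
      (hzi : z i = d • P *ᵥ x) (hwi : w i = d' • Q *ᵥ y) :
      H (veronese r x) = (c i * d' ^ (r - 1) / d ^ (r - 1)) • veronese r y := by
    have hi := hc i
    rw [hzi, hwi, veronese_smul, veronese_smul, map_smul, ← symPow_veronese,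
      ← symPow_veronese, ← eq_inv_smul_iff₀ (pow_ne_zero _ hd)] at hi
    rw [LinearMap.comp_apply, LinearMap.comp_apply, hi, map_smul, map_smul, map_smul,
      ← LinearMap.comp_apply, ← symPow_mul, nonsing_inv_mul _ (isUnit_iff_ne_zero.mpr hQ),
      symPow_one, LinearMap.id_apply, smul_smul, smul_smul]
    congr 1
    ring
  have hu := hH (Fin.natAdd r 0) one_ne_zero (by rw [hPu, one_smul]) (d' := 1)
    (by rw [hQu, one_smul])
  have hv := hH (Fin.natAdd r 1) one_ne_zero (by rw [hPv, one_smul]) (d' := 1)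
    (by rw [hQv, one_smul])
  simp only [one_pow, mul_one, div_one] at hu hv
  have hll' (i : Fin r) : ∃ f : k, H (veronese r ![1, l i]) = f • veronese r ![1, l' i] := by
    obtain ⟨d, hd, hzi⟩ := hPz i
    obtain ⟨d', -, hwi⟩ := hQw i
    exact ⟨_, hH (Fin.castAdd 2 i) hd hzi hwi⟩
  obtain ⟨α, hα, hHα⟩ := exists_eq_smul_symPow_diagonal hl hl' hl0 hl0' (hc0 _) (hc0 _) hu hv hll'
  refine ⟨Q * diagonal ![1, α] * P⁻¹, by simp [det_mul, hP, hQ, hα], c (Fin.natAdd r 0),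
    hc0 _, LinearMap.ext fun x => ?_⟩
  have hx := congrArg (symPow r Q) (LinearMap.congr_fun hHα (symPow r P⁻¹ x))
  simpa only [H, LinearMap.comp_apply, symPow_apply_symPow_inv hP, symPow_apply_symPow_inv hQ,
    LinearMap.smul_apply, map_smul, symPow_mul] using hx

end Rigidity

section Projective

variable {k : Type*} [Field k] {r : ℕ} {V : Type*} [AddCommGroup V] [Module k V]

lemma mem_image_stdRNC_iff {f : (Fin r → k) →ₗ[k] V} (hf : Function.Injective f) {P : ℙ k V} :
    P ∈ Projectivization.map f hf '' stdRNC k r ↔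
      ∃ (x : Fin 2 → k) (hx : f (veronese r x) ≠ 0), P = Projectivization.mk k _ hx := by
  constructor
  · rintro ⟨_, ⟨s, t, hst, rfl⟩, rfl⟩
    exact ⟨![s, t], (map_ne_zero_iff f hf).mpr hst, Projectivization.map_mk _ _ _ _⟩
  · rintro ⟨x, hx, rfl⟩
    have hx' : veronese r x ≠ 0 := fun h => hx (by rw [h, map_zero])
    exact ⟨Projectivization.mk k _ hx', ⟨x 0, x 1, hx', rfl⟩, Projectivization.map_mk _ _ _ _⟩

lemma mk_eq_mk_of_wedge_eq_zero (hr : 2 ≤ r) (f : (Fin r → k) →ₗ[k] V) {x y : Fin 2 → k}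
    (hx : f (veronese r x) ≠ 0) (hy : f (veronese r y) ≠ 0) (h : wedge x y = 0) :
    Projectivization.mk k _ hx = Projectivization.mk k _ hy := by
  have hy0 : y ≠ 0 := by
    rintro rfl
    exact hy (by rw [veronese_zero hr, map_zero])
  obtain ⟨d, rfl⟩ := exists_eq_smul_of_wedge_eq_zero hy0 h
  exact (Projectivization.mk_eq_mk_iff' _ _ _ _ _).mpr
    ⟨d ^ (r - 1), by rw [veronese_smul, map_smul]⟩

end Projective

theorem IsRNC.subset_of_common_points {k : Type*} [Field k] [Infinite k] {r : ℕ} (hr : 2 ≤ r)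
    {X X' : Set (ℙ k (Fin r → k))} (hX : IsRNC k r X) (hX' : IsRNC k r X')
    {p : Fin (r + 2) → ℙ k (Fin r → k)} (hp : Function.Injective p)
    (hmem : ∀ i, p i ∈ X ∧ p i ∈ X') : X ⊆ X' := by
  obtain ⟨g, rfl⟩ := hX
  obtain ⟨g', rfl⟩ := hX'
  choose z hz hpz using fun i => (mem_image_stdRNC_iff _).mp (hmem i).1
  choose w hw hpw using fun i => (mem_image_stdRNC_iff _).mp (hmem i).2
  have hzw (i) : ∃ c : k, c ≠ 0 ∧
      (g'.symm.toLinearMap ∘ₗ g.toLinearMap) (veronese r (z i)) = c • veronese r (w i) := by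
    obtain ⟨c, hc⟩ := (Projectivization.mk_eq_mk_iff' _ _ _ _ _).mp ((hpz i).symm.trans (hpw i))
    refine ⟨c, fun h0 => hz i (by rw [← hc, h0, zero_smul]), ?_⟩
    simp only [LinearMap.comp_apply, LinearEquiv.coe_coe] at hc ⊢
    rw [← hc, map_smul, LinearEquiv.symm_apply_apply]
  obtain ⟨A, hA, c, hc, hgg'⟩ := exists_eq_smul_symPow
    (fun i j hij h0 => hp.ne hij (by rw [hpz, hpz]; exact mk_eq_mk_of_wedge_eq_zero hr _ _ _ h0))
    (fun i j hij h0 => hp.ne hij (by rw [hpw, hpw]; exact mk_eq_mk_of_wedge_eq_zero hr _ _ _ h0))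
    hzw
  rintro P hP
  obtain ⟨x, hx, rfl⟩ := (mem_image_stdRNC_iff _).mp hP
  have hgx : g (veronese r x) = c • g' (veronese r (A *ᵥ x)) := by
    rw [← symPow_veronese, ← map_smul, ← LinearMap.smul_apply, ← hgg']
    simp only [LinearMap.comp_apply, LinearEquiv.coe_coe, LinearEquiv.apply_symm_apply]
  have hx' : g' (veronese r (A *ᵥ x)) ≠ 0 := fun h0 =>
    hx (by rw [LinearEquiv.coe_coe, hgx, h0, smul_zero])
  exact (mem_image_stdRNC_iff _).mpr ⟨A *ᵥ x, hx',
    (Projectivization.mk_eq_mk_iff' _ _ _ _ _).mpr ⟨c, hgx.symm⟩⟩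

theorem stmt_16_general (k : Type*) [Field k] [IsAlgClosed k] (r : ℕ) (hr : 2 ≤ r)
    (X X' : Set (ℙ k (Fin r → k))) (hX : IsRNC k r X) (hX' : IsRNC k r X')
    (p : Fin (r + 2) → ℙ k (Fin r → k)) (hp : Function.Injective p)
    (hmem : ∀ i, p i ∈ X ∧ p i ∈ X') :
    X = X' :=
  (hX.subset_of_common_points hr hX' hp hmem).antisymm
    (hX'.subset_of_common_points hr hX hp fun i => (hmem i).symm)

/-- Two rational normal curves in `ℙ^{r−1}` sharing `r+2` points in general linear
position are equal. -/
theorem stmt_16 (k : Type*) [Field k] [IsAlgClosed k] (r : ℕ) (hr : 2 ≤ r)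
    (X X' : Set (ℙ k (Fin r → k))) (hX : IsRNC k r X) (hX' : IsRNC k r X')
    (p : Fin (r + 2) → ℙ k (Fin r → k)) (hp : Function.Injective p)
    (hmem : ∀ i, p i ∈ X ∧ p i ∈ X')
    (hgen : ∀ s : Finset (Fin (r + 2)), s.card = r →
      Projectivization.Independent fun i : s => p i) :
    X = X' :=
  stmt_16_general k r hr X X' hX hX' p hp hmem
end
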